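/- arXiv:1502.01364 — 8 statements merged into one kernel-verified Lean document; each statement's English description precedes it below -/
import Mathlib

section
/- Let D be a closed disk in the complex plane, i.e. D = {z ∈ ℂ : |z - c| ≤ r} for some c ∈ ℂ and r ≥ 0. Then for every positive integer n and all complex numbers z₁, z₂, …, zₙ ∈ D, there exists z ∈ D such that zⁿ = z₁ · z₂ ⋯ zₙ. -/
/-!
After scaling, the disk is `closedBall 1 ρ`; a disk centred at `0` is immediate. A nonzero point
`exp x * ζ` with `‖ζ‖ = 1` lies in it iff `exp x + (1 - ρ²) exp (-x) ≤ 2 re ζ`. The root sought is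
`exp x̄ * ω`, where `x̄` is the mean of the `xᵢ` and `ωⁿ = ∏ ζᵢ` with `∑ f (re ζᵢ) ≤ n f (re ω)`.
For `ρ ≤ 1` the left side of the criterion is convex in `x` and `f = id` suffices; for `ρ > 1` the
criterion reads `x - log s ≤ arsinh (re ζ / s)` with `s² = ρ² - 1`, and `f = arsinh (· / s)`.

Such an `ω` exists for every odd monotone `f` that is concave on `[0, ∞)`. Two factors
`exp (i (Y ± D))` have real parts `p ∓ h` with `p = cos Y cos D`; replacing both by the square root
`±exp (i Y)` of their product with real part `|cos Y| ≥ |p|` does not decrease the sum, because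
`f (p + h) + f (p - h) ≤ 2 f |p|`. Once all real parts are nonnegative, all arguments lie in
`[-π/2, π/2]` and Jensen's inequality, for `f` and for `cos`, gives `ω = exp (i · mean arg)`.
-/

open Real Set Finset
open Complex (I)
open scoped Pointwise

theorem ConcaveOn.map_add_add_map_zero_le {f : ℝ → ℝ} (hf : ConcaveOn ℝ (Ici 0) f) {a b : ℝ}
    (ha : 0 ≤ a) (hb : 0 ≤ b) : f (a + b) + f 0 ≤ f a + f b := by
  rcases (add_nonneg ha hb).eq_or_lt with hab | hab
  · obtain rfl : a = 0 := by linarith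
    obtain rfl : b = 0 := by linarith
    simp
  have hw : a / (a + b) + b / (a + b) = 1 := by field_simp
  have h₁ := hf.2 (mem_Ici.2 hab.le) self_mem_Ici (div_nonneg ha hab.le) (div_nonneg hb hab.le) hw
  have h₂ := hf.2 (mem_Ici.2 hab.le) self_mem_Ici (div_nonneg hb hab.le) (div_nonneg ha hab.le)
    ((add_comm _ _).trans hw)
  simp only [smul_eq_mul, mul_zero, add_zero, div_mul_cancel₀ _ hab.ne'] at h₁ h₂
  linear_combination h₁ + h₂ - (f (a + b) + f 0) * hw

theorem ConcaveOn.sum_le_mul_map_mean {s : Set ℝ} {g : ℝ → ℝ} (hg : ConcaveOn ℝ s g) {n : ℕ}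
    (hn : 0 < n) {x : Fin n → ℝ} (hx : ∀ i, x i ∈ s) :
    ∑ i, g (x i) ≤ n * g ((∑ i, x i) / n) := by
  have hn' : (n : ℝ) ≠ 0 := by positivity
  have := hg.le_map_sum (t := univ) (w := fun _ => (n : ℝ)⁻¹) (p := x) (fun _ _ => by positivity)
    (by simp [hn']) (fun i _ => hx i)
  simp only [smul_eq_mul, ← div_eq_inv_mul, ← sum_div] at this
  calc ∑ i, g (x i) = n * ((∑ i, g (x i)) / n) := by field_simp
    _ ≤ n * g ((∑ i, x i) / n) := by gcongr

theorem ConvexOn.mul_map_mean_le {s : Set ℝ} {g : ℝ → ℝ} (hg : ConvexOn ℝ s g) {n : ℕ}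
    (hn : 0 < n) {x : Fin n → ℝ} (hx : ∀ i, x i ∈ s) :
    n * g ((∑ i, x i) / n) ≤ ∑ i, g (x i) := by
  simpa [sum_neg_distrib] using hg.neg.sum_le_mul_map_mean hn hx

@[to_additive]
theorem prod_update_update_mul {M ι : Type*} [CommMonoid M] [Fintype ι] [DecidableEq ι]
    (g : ι → M) {i j : ι} (hij : i ≠ j) (a b : M) :
    (∏ k, Function.update (Function.update g i a) j b k) * (g i * g j) = (∏ k, g k) * (a * b) := by
  have hi : i ∈ (univ : Finset ι) \ {j} := by simpa using hij
  rw [prod_update_of_mem (mem_univ j), prod_update_of_mem hi,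
    prod_eq_mul_prod_sdiff_singleton_of_mem (mem_univ j),
    prod_eq_mul_prod_sdiff_singleton_of_mem hi]
  ac_rfl

theorem concaveOn_arsinh : ConcaveOn ℝ (Ici 0) arsinh := by
  refine AntitoneOn.concaveOn_of_deriv (convex_Ici 0) continuous_arsinh.continuousOn
    differentiable_arsinh.differentiableOn fun s hs t ht hst => ?_
  rw [interior_Ici] at hs ht
  rw [(hasDerivAt_arsinh s).deriv, (hasDerivAt_arsinh t).deriv]
  gcongr
  exact hs.out.le

theorem concaveOn_arsinh_div {s : ℝ} (hs : 0 < s) :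
    ConcaveOn ℝ (Ici 0) fun t => arsinh (t / s) := by
  refine ⟨convex_Ici 0, fun a ha b hb μ ν hμ hν hμν => ?_⟩
  have := concaveOn_arsinh.2 (mem_Ici.2 (div_nonneg ha hs.le)) (mem_Ici.2 (div_nonneg hb hs.le))
    hμ hν hμν
  simpa only [smul_eq_mul, add_div, mul_div_assoc] using this

theorem Complex.exp_arg_mul_I_of_norm_eq_one {ζ : ℂ} (hζ : ‖ζ‖ = 1) :
    Complex.exp (Complex.arg ζ * I) = ζ := by
  simpa [hζ] using Complex.norm_mul_exp_arg_mul_I ζ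

section OddConcave

variable {f : ℝ → ℝ}

theorem Function.Odd.map_add_add_map_sub_le (hodd : f.Odd)
    (hf : ConcaveOn ℝ (Ici 0) f) {p h : ℝ} (hp : 0 ≤ p) (hh : 0 ≤ h) :
    f (p + h) + f (p - h) ≤ 2 * f p := by
  rcases le_total h p with hhp | hph
  · have := hf.2 (mem_Ici.2 (by linarith : 0 ≤ p + h)) (mem_Ici.2 (by linarith : 0 ≤ p - h))
      (by norm_num : (0 : ℝ) ≤ 1 / 2) (by norm_num : (0 : ℝ) ≤ 1 / 2) (by norm_num)
    simp only [smul_eq_mul] at this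
    rw [show 1 / 2 * (p + h) + 1 / 2 * (p - h) = p by ring] at this
    linarith
  · have h₁ := hf.map_add_add_map_zero_le (sub_nonneg.2 hph) (by linarith : 0 ≤ 2 * p)
    have h₂ := hf.map_add_add_map_zero_le hp hp
    rw [show h - p + 2 * p = p + h by ring] at h₁
    rw [← two_mul] at h₂
    have h₃ : f (p - h) = -f (h - p) := by rw [← hodd, neg_sub]
    linarith [hodd.map_zero]

theorem Function.Odd.map_add_add_map_sub_le_two_mul_map_abs (hodd : f.Odd)
    (hmono : Monotone f) (hf : ConcaveOn ℝ (Ici 0) f) (p h : ℝ) :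
    f (p + h) + f (p - h) ≤ 2 * f |p| := by
  have key : f (p + |h|) + f (p - |h|) ≤ 2 * f |p| :=
    (add_le_add (hmono (by linarith [le_abs_self p])) (hmono (by linarith [le_abs_self p]))).trans
      (hodd.map_add_add_map_sub_le hf (abs_nonneg p) (abs_nonneg h))
  rcases abs_cases h with ⟨hh, -⟩ | ⟨hh, -⟩ <;> rw [hh] at key
  · exact key
  · rwa [sub_neg_eq_add, ← sub_eq_add_neg, add_comm (f _)] at key

theorem Function.Odd.exists_sq_eq_mul_re_nonneg (hodd : f.Odd) (hmono : Monotone f)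
    (hf : ConcaveOn ℝ (Ici 0) f) {ζ₁ ζ₂ : ℂ} (h₁ : ‖ζ₁‖ = 1) (h₂ : ‖ζ₂‖ = 1) :
    ∃ ω : ℂ, ‖ω‖ = 1 ∧ 0 ≤ ω.re ∧ ω ^ 2 = ζ₁ * ζ₂ ∧ f ζ₁.re + f ζ₂.re ≤ 2 * f ω.re := by
  set Y := (Complex.arg ζ₁ + Complex.arg ζ₂) / 2
  set D := (Complex.arg ζ₁ - Complex.arg ζ₂) / 2
  have e₁ : ζ₁ = Complex.exp ((Y + D : ℝ) * I) := by
    rw [show Y + D = Complex.arg ζ₁ by ring, Complex.exp_arg_mul_I_of_norm_eq_one h₁]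
  have e₂ : ζ₂ = Complex.exp ((Y - D : ℝ) * I) := by
    rw [show Y - D = Complex.arg ζ₂ by ring, Complex.exp_arg_mul_I_of_norm_eq_one h₂]
  have hle : f ζ₁.re + f ζ₂.re ≤ 2 * f |cos Y| :=
    calc f ζ₁.re + f ζ₂.re
        = f (cos Y * cos D + -(sin Y * sin D)) + f (cos Y * cos D - -(sin Y * sin D)) := by
          rw [e₁, e₂, Complex.exp_ofReal_mul_I_re, Complex.exp_ofReal_mul_I_re, cos_add, cos_sub,
            sub_neg_eq_add, ← sub_eq_add_neg]
      _ ≤ 2 * f |cos Y * cos D| := hodd.map_add_add_map_sub_le_two_mul_map_abs hmono hf _ _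
      _ ≤ 2 * f |cos Y| := by
          gcongr
          exact hmono (by simpa [abs_mul] using
            mul_le_of_le_one_right (abs_nonneg (cos Y)) (abs_cos_le_one D))
  have hsq : Complex.exp (Y * I) ^ 2 = ζ₁ * ζ₂ := by
    rw [e₁, e₂, ← Complex.exp_add, ← Complex.exp_nat_mul]
    congr 1
    push_cast
    ring
  obtain ⟨ω, hω, hωre, hω2⟩ : ∃ ω : ℂ, ‖ω‖ = 1 ∧ ω.re = |cos Y| ∧ ω ^ 2 = ζ₁ * ζ₂ := by
    rcases abs_cases (cos Y) with ⟨h, -⟩ | ⟨h, -⟩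
    · exact ⟨_, Complex.norm_exp_ofReal_mul_I Y, by rw [Complex.exp_ofReal_mul_I_re, h], hsq⟩
    · exact ⟨-Complex.exp (Y * I), by rw [norm_neg, Complex.norm_exp_ofReal_mul_I],
        by rw [Complex.neg_re, Complex.exp_ofReal_mul_I_re, h], by rw [neg_sq, hsq]⟩
  exact ⟨ω, hω, hωre ▸ abs_nonneg _, hω2, hωre ▸ hle⟩

theorem exists_pow_eq_prod_of_re_nonneg (hmono : Monotone f)
    (hf : ConcaveOn ℝ (Ici 0) f) {n : ℕ} (hn : 0 < n) {ζ : Fin n → ℂ} (hζ : ∀ i, ‖ζ i‖ = 1)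
    (hre : ∀ i, 0 ≤ (ζ i).re) :
    ∃ ω : ℂ, ‖ω‖ = 1 ∧ ω ^ n = ∏ i, ζ i ∧ ∑ i, f (ζ i).re ≤ n * f ω.re := by
  set φ := (∑ i, Complex.arg (ζ i)) / n
  have harg : ∀ i, Complex.arg (ζ i) ∈ Icc (-(π / 2)) (π / 2) := fun i =>
    abs_le.1 (Complex.abs_arg_le_pi_div_two_iff.2 (hre i))
  have hcos : ∀ i, (ζ i).re = cos (Complex.arg (ζ i)) := fun i => by
    rw [← Complex.exp_ofReal_mul_I_re, Complex.exp_arg_mul_I_of_norm_eq_one (hζ i)]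
  refine ⟨Complex.exp (φ * I), Complex.norm_exp_ofReal_mul_I φ, ?_, ?_⟩
  · rw [← Complex.exp_nat_mul,
      ← prod_congr rfl fun i _ => Complex.exp_arg_mul_I_of_norm_eq_one (hζ i), ← Complex.exp_sum,
      ← sum_mul]
    congr 1
    have hn' : (n : ℂ) ≠ 0 := Nat.cast_ne_zero.2 hn.ne'
    simp only [φ]
    push_cast
    field_simp
  · have hmean : (∑ i, (ζ i).re) / n ≤ cos φ := by
      rw [div_le_iff₀ (by positivity), mul_comm]
      simpa only [hcos] using strictConcaveOn_cos_Icc.concaveOn.sum_le_mul_map_mean hn harg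
    calc ∑ i, f (ζ i).re ≤ n * f ((∑ i, (ζ i).re) / n) := hf.sum_le_mul_map_mean hn hre
      _ ≤ n * f (Complex.exp (φ * I)).re := by
        rw [Complex.exp_ofReal_mul_I_re]
        gcongr
        exact hmono hmean

theorem Function.Odd.exists_re_nonneg_prod_eq (hodd : f.Odd) (hmono : Monotone f)
    (hf : ConcaveOn ℝ (Ici 0) f) {n : ℕ} (hn : 1 < n) (ζ : Fin n → ℂ) (hζ : ∀ i, ‖ζ i‖ = 1) :
    ∃ ξ : Fin n → ℂ, (∀ i, ‖ξ i‖ = 1) ∧ (∀ i, 0 ≤ (ξ i).re) ∧ ∏ i, ξ i = ∏ i, ζ i ∧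
      ∑ i, f (ζ i).re ≤ ∑ i, f (ξ i).re := by
  have : Nontrivial (Fin n) := Fin.nontrivial_iff_two_le.2 hn
  induction hk : #{i | (ζ i).re < 0} using Nat.strong_induction_on generalizing ζ with
  | _ k ih =>
  by_cases hgood : ∀ i, 0 ≤ (ζ i).re
  · exact ⟨ζ, hζ, hgood, rfl, le_rfl⟩
  obtain ⟨i, hi⟩ : ∃ i, (ζ i).re < 0 := by simpa using hgood
  obtain ⟨j, hji⟩ := exists_ne i
  obtain ⟨ω, hω, hωre, hω2, hle⟩ := hodd.exists_sq_eq_mul_re_nonneg hmono hf (hζ i) (hζ j)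
  set ζ' := Function.update (Function.update ζ i ω) j ω
  have hζ' : ∀ l, ‖ζ' l‖ = 1 := fun l => by
    simp only [ζ', Function.update_apply]; split_ifs <;> simp [hω, hζ]
  have hlt : #{l | (ζ' l).re < 0} < k := by
    rw [← hk]
    refine card_lt_card ((Finset.ssubset_iff_of_subset fun l => ?_).2 ⟨i, by simpa using hi, ?_⟩)
    · simp only [ζ', Function.update_apply, mem_filter]
      split_ifs <;> simp_all
    · simp [ζ', Function.update_apply, hji.symm, hωre]
  obtain ⟨ξ, hξ, hξre, hprod, hsum⟩ := ih _ hlt ζ' hζ' rfl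
  refine ⟨ξ, hξ, hξre, ?_, ?_⟩
  · have := prod_update_update_mul ζ hji.symm ω ω
    rw [← pow_two, hω2] at this
    rw [hprod]
    exact mul_right_cancel₀ (by simp [← norm_ne_zero_iff, hζ]) this
  · have := sum_update_update_add (fun l => f (ζ l).re) hji.symm (f ω.re) (f ω.re)
    have hcomp : (fun l => f (ζ' l).re) =
        Function.update (Function.update (fun l => f (ζ l).re) i (f ω.re)) j (f ω.re) := by
      ext l; simp only [ζ', Function.update_apply]; split_ifs <;> rfl
    rw [← hcomp] at this
    linarith

theorem Function.Odd.exists_pow_eq_prod (hodd : f.Odd) (hmono : Monotone f)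
    (hf : ConcaveOn ℝ (Ici 0) f) {n : ℕ} (hn : 0 < n) {ζ : Fin n → ℂ} (hζ : ∀ i, ‖ζ i‖ = 1) :
    ∃ ω : ℂ, ‖ω‖ = 1 ∧ ω ^ n = ∏ i, ζ i ∧ ∑ i, f (ζ i).re ≤ n * f ω.re := by
  obtain rfl | hn := Nat.eq_or_lt_of_le hn
  · exact ⟨ζ 0, hζ 0, by simp, by simp⟩
  obtain ⟨ξ, hξ, hre, hprod, hsum⟩ := hodd.exists_re_nonneg_prod_eq hmono hf hn ζ hζ
  obtain ⟨ω, hω, hpow, hle⟩ := exists_pow_eq_prod_of_re_nonneg hmono hf (by omega) hξ hre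
  exact ⟨ω, hω, hpow.trans hprod, hsum.trans hle⟩

end OddConcave

theorem norm_exp_mul_sub_one_le_iff {ρ : ℝ} (hρ : 0 ≤ ρ) (x : ℝ) {ζ : ℂ} (hζ : ‖ζ‖ = 1) :
    ‖(exp x : ℂ) * ζ - 1‖ ≤ ρ ↔ exp x + (1 - ρ ^ 2) * exp (-x) ≤ 2 * ζ.re := by
  have hζ' : ζ.re * ζ.re + ζ.im * ζ.im = 1 := by
    rw [← Complex.normSq_apply, ← Complex.sq_norm, hζ, one_pow]
  have hsq : ‖(exp x : ℂ) * ζ - 1‖ ^ 2 = exp x ^ 2 - 2 * exp x * ζ.re + 1 := by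
    rw [Complex.sq_norm, Complex.normSq_apply]
    simp only [Complex.sub_re, Complex.sub_im, Complex.mul_re, Complex.mul_im, Complex.ofReal_re,
      Complex.ofReal_im, Complex.one_re, Complex.one_im]
    linear_combination exp x ^ 2 * hζ'
  have hmul : exp x * (exp x + (1 - ρ ^ 2) * exp (-x)) = exp x ^ 2 + 1 - ρ ^ 2 := by
    rw [exp_neg]
    field_simp
    ring
  rw [← sq_le_sq₀ (norm_nonneg _) hρ, hsq,
    ← mul_le_mul_iff_right₀ (exp_pos x) (b := exp x + _), hmul]
  constructor <;> intro h <;> linarith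

theorem exp_add_mul_exp_neg_le_iff {B : ℝ} (hB : B < 0) (x c : ℝ) :
    exp x + B * exp (-x) ≤ 2 * c ↔ x - log √(-B) ≤ arsinh (c / √(-B)) := by
  set s := √(-B)
  have hs : 0 < s := sqrt_pos.2 (neg_pos.2 hB)
  have hB' : B = -s ^ 2 := by rw [sq_sqrt (neg_pos.2 hB).le, neg_neg]
  have hsinh : exp x + B * exp (-x) = 2 * s * sinh (x - log s) := by
    rw [sinh_eq, exp_sub, exp_neg (x - log s), exp_sub, exp_log hs, hB', exp_neg]
    field_simp
    ring
  rw [hsinh, ← sinh_le_sinh (x := x - log s), sinh_arsinh, le_div_iff₀ hs]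
  constructor <;> intro h <;> linarith

theorem exists_pow_eq_prod_of_exp_add_mul_exp_neg_le_of_nonneg {B : ℝ} (hB : 0 ≤ B) {n : ℕ}
    (hn : 0 < n) {x : Fin n → ℝ} {ζ : Fin n → ℂ} (hζ : ∀ i, ‖ζ i‖ = 1)
    (h : ∀ i, exp (x i) + B * exp (-x i) ≤ 2 * (ζ i).re) :
    ∃ ω : ℂ, ‖ω‖ = 1 ∧ ω ^ n = ∏ i, ζ i ∧
      exp ((∑ i, x i) / n) + B * exp (-((∑ i, x i) / n)) ≤ 2 * ω.re := by
  obtain ⟨ω, hω, hpow, hsum⟩ := Function.Odd.exists_pow_eq_prod (f := id) (fun _ => rfl)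
    monotone_id (concaveOn_id (convex_Ici 0)) hn hζ
  refine ⟨ω, hω, hpow, le_of_mul_le_mul_left ?_ (Nat.cast_pos.2 hn)⟩
  have hconv : ConvexOn ℝ univ fun y => exp y + B * exp (-y) :=
    convexOn_exp.add ((convexOn_exp.comp_linearMap (-LinearMap.id)).smul hB)
  calc n * (exp ((∑ i, x i) / n) + B * exp (-((∑ i, x i) / n)))
      ≤ ∑ i, (exp (x i) + B * exp (-x i)) := hconv.mul_map_mean_le hn fun _ => mem_univ _
    _ ≤ ∑ i, 2 * (ζ i).re := sum_le_sum fun i _ => h i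
    _ ≤ n * (2 * ω.re) := by
      rw [← mul_sum, mul_left_comm]
      gcongr
      exact hsum

theorem exists_pow_eq_prod_of_exp_add_mul_exp_neg_le_of_neg {B : ℝ} (hB : B < 0) {n : ℕ}
    (hn : 0 < n) {x : Fin n → ℝ} {ζ : Fin n → ℂ} (hζ : ∀ i, ‖ζ i‖ = 1)
    (h : ∀ i, exp (x i) + B * exp (-x i) ≤ 2 * (ζ i).re) :
    ∃ ω : ℂ, ‖ω‖ = 1 ∧ ω ^ n = ∏ i, ζ i ∧
      exp ((∑ i, x i) / n) + B * exp (-((∑ i, x i) / n)) ≤ 2 * ω.re := by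
  set s := √(-B)
  have hs : 0 < s := sqrt_pos.2 (neg_pos.2 hB)
  obtain ⟨ω, hω, hpow, hsum⟩ := Function.Odd.exists_pow_eq_prod (f := fun t => arsinh (t / s))
    (fun t => by simp [neg_div, arsinh_neg])
    (arsinh_strictMono.monotone.comp (monotone_div_right_of_nonneg hs.le))
    (concaveOn_arsinh_div hs) hn hζ
  refine ⟨ω, hω, hpow, (exp_add_mul_exp_neg_le_iff hB _ _).2 ?_⟩
  have hx : ∀ i, x i - log s ≤ arsinh ((ζ i).re / s) := fun i =>
    (exp_add_mul_exp_neg_le_iff hB _ _).1 (h i)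
  rw [← div_le_iff₀' (Nat.cast_pos.2 hn)] at hsum
  calc (∑ i, x i) / n - log s = (∑ i, (x i - log s)) / n := by
        rw [sum_sub_distrib, sum_const, card_univ, Fintype.card_fin, nsmul_eq_mul]
        field_simp
    _ ≤ (∑ i, arsinh ((ζ i).re / s)) / n := by gcongr with i; exact hx i
    _ ≤ arsinh (ω.re / s) := hsum

def ContainsGeomMeans {M : Type*} [CommMonoid M] (S : Set M) (n : ℕ) : Prop :=
  ∀ z : Fin n → M, (∀ i, z i ∈ S) → ∃ w ∈ S, w ^ n = ∏ i, z i

theorem ContainsGeomMeans.smul {M : Type*} [CommMonoid M] {S : Set M} {n : ℕ}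
    (h : ContainsGeomMeans S n) (a : M) : ContainsGeomMeans (a • S) n := by
  intro z hz
  choose s hs hsz using hz
  obtain ⟨w, hw, hpow⟩ := h s hs
  refine ⟨a • w, smul_mem_smul_set hw, ?_⟩
  simp only [← hsz, smul_eq_mul, mul_pow, hpow, prod_mul_distrib, prod_const, card_univ,
    Fintype.card_fin]

theorem containsGeomMeans_closedBall_zero {n : ℕ} (hn : 0 < n) (r : ℝ) :
    ContainsGeomMeans (Metric.closedBall (0 : ℂ) r) n := by
  intro z hz
  simp only [mem_closedBall_zero_iff] at hz ⊢
  obtain ⟨w, hw⟩ := IsAlgClosed.exists_pow_nat_eq (∏ i, z i) hn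
  have hr : 0 ≤ r := (norm_nonneg _).trans (hz ⟨0, hn⟩)
  refine ⟨w, (pow_le_pow_iff_left₀ (norm_nonneg w) hr hn.ne').1 ?_, hw⟩
  calc ‖w‖ ^ n = ∏ i, ‖z i‖ := by rw [← norm_pow, hw, norm_prod]
    _ ≤ ∏ _i : Fin n, r := prod_le_prod (fun _ _ => norm_nonneg _) fun i _ => hz i
    _ = r ^ n := by simp

theorem containsGeomMeans_closedBall_one {n : ℕ} (hn : 0 < n) (ρ : ℝ) :
    ContainsGeomMeans (Metric.closedBall (1 : ℂ) ρ) n := by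
  intro u hu
  have hρ : 0 ≤ ρ := dist_nonneg.trans (hu ⟨0, hn⟩)
  by_cases hzero : ∃ i, u i = 0
  · obtain ⟨i, hi⟩ := hzero
    exact ⟨0, hi ▸ hu i, by rw [zero_pow hn.ne', eq_comm]; exact prod_eq_zero (mem_univ i) hi⟩
  simp only [not_exists] at hzero
  set x := fun i => log ‖u i‖
  set ζ := fun i => u i / ‖u i‖
  have hζ : ∀ i, ‖ζ i‖ = 1 := fun i => by simp [ζ, hzero i]
  have hpolar : ∀ i, (exp (x i) : ℂ) * ζ i = u i := fun i => by
    simp [x, ζ, exp_log (norm_pos_iff.2 (hzero i)), mul_div_cancel₀, hzero i]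
  have hcrit : ∀ i, exp (x i) + (1 - ρ ^ 2) * exp (-x i) ≤ 2 * (ζ i).re := fun i =>
    (norm_exp_mul_sub_one_le_iff hρ (x i) (hζ i)).1 (by rw [hpolar, ← Complex.dist_eq]; exact hu i)
  obtain ⟨ω, hω, hpow, hle⟩ := (le_or_gt 0 (1 - ρ ^ 2)).elim
    (exists_pow_eq_prod_of_exp_add_mul_exp_neg_le_of_nonneg · hn hζ hcrit)
    (exists_pow_eq_prod_of_exp_add_mul_exp_neg_le_of_neg · hn hζ hcrit)
  refine ⟨exp ((∑ i, x i) / n) * ω, ?_, ?_⟩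
  · rw [Metric.mem_closedBall, Complex.dist_eq, norm_exp_mul_sub_one_le_iff hρ _ hω]
    exact hle
  · rw [mul_pow, hpow, ← Complex.ofReal_pow, ← exp_nat_mul, mul_div_cancel₀ _ (by positivity),
      exp_sum, Complex.ofReal_prod, ← prod_mul_distrib]
    exact prod_congr rfl fun i _ => hpolar i

theorem geometric_mean_closedDisk_general (c : ℂ) (r : ℝ)
    (n : ℕ) (hn : 0 < n) (z : Fin n → ℂ)
    (hz : ∀ i, z i ∈ Metric.closedBall c r) :
    ∃ w ∈ Metric.closedBall c r, w ^ n = ∏ i, z i := by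
  suffices h : ContainsGeomMeans (Metric.closedBall c r) n from h z hz
  rcases eq_or_ne c 0 with rfl | hc
  · exact containsGeomMeans_closedBall_zero hn r
  · have h := (containsGeomMeans_closedBall_one hn (r / ‖c‖)).smul c
    rwa [smul_closedBall' hc, smul_eq_mul, mul_one,
      mul_div_cancel₀ _ (norm_ne_zero_iff.2 hc)] at h

/-- Closed-disk case of Proposition 2: for z₁,…,zₙ in a closed disk D,
there is z ∈ D with zⁿ = z₁⋯zₙ. -/
theorem geometric_mean_closedDisk (c : ℂ) (r : ℝ) (hr : 0 ≤ r)
    (n : ℕ) (hn : 0 < n) (z : Fin n → ℂ)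
    (hz : ∀ i, z i ∈ Metric.closedBall c r) :
    ∃ w ∈ Metric.closedBall c r, w ^ n = ∏ i, z i :=
  geometric_mean_closedDisk_general c r n hn z hz
end

section
/- (Gauss–Lucas) If P is a non-constant polynomial with complex coefficients, then every root of the derivative P′ belongs to the convex hull (over ℝ, in ℂ viewed as a real vector space) of the set of roots of P. -/
open Polynomial

/-- Gauss–Lucas theorem: every root of the derivative of a non-constant complex
polynomial lies in the convex hull of the roots of the polynomial. -/
theorem gauss_lucas (P : Polynomial ℂ) (hP : 1 ≤ P.degree)
    (z : ℂ) (hz : Polynomial.eval z (Polynomial.derivative P) = 0) :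
    z ∈ convexHull ℝ {w : ℂ | Polynomial.eval w P = 0} := by
  have hP_pos : 0 < P.degree := lt_of_lt_of_le zero_lt_one hP
  have hP₀ : P ≠ 0 := ne_zero_of_degree_gt hP_pos
  have hP'₀ : derivative P ≠ 0 :=
    derivative_ne_zero.2 (natDegree_pos_iff_degree_pos.2 hP_pos).ne'
  have hz_root : z ∈ (derivative P).rootSet ℂ := by
    simpa [mem_rootSet, hP'₀] using hz
  have h_rootSet : P.rootSet ℂ = {w : ℂ | eval w P = 0} := by
    ext w
    simp [mem_rootSet, hP₀]
  exact h_rootSet ▸ rootSet_derivative_subset_convexHull_rootSet hP_pos hz_root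
end

section
/- (Grace–Walsh–Szegő, closed disk case) Let f : ℂⁿ → ℂ be a polynomial in n variables z₁, …, zₙ which is affine (degree at most 1) in each variable separately and is invariant under every permutation of the variables. Let D = {z ∈ ℂ : |z - c| ≤ r} be a closed disk, and let ζ₁, …, ζₙ ∈ D. Then there exists ζ ∈ D such that f(ζ₁, …, ζₙ) = f(ζ, …, ζ). -/
/-!
Induction on the number of variables, in the contrapositive form: if a symmetric multiaffine `p`
has no zero `(w, …, w)` with `w` in the disk, it has no zero in the polydisk. Fixing the first
variable at `z` leaves a symmetric multiaffine polynomial in one variable fewer, whose diagonal is,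
up to the factor `n + 1`, the polar derivative `(n + 1) q + (z - X) q'` of the diagonal `q` of `p`
(affineness in `x₀` plus symmetry). Laguerre's theorem keeps that polar derivative zero-free on the
disk: the roots `ρ` of `q` lie outside the disk, and `u ↦ 1 / (w - u)` maps the exterior into a
convex set containing `0` but not `1 / (w - z)`, which would be the average of the `1 / (w - ρ)`.
-/

open scoped Polynomial
open Polynomial (derivative)
open Metric

theorem Convex.inv_natCast_smul_multiset_sum_mem {𝕜 E : Type*} [Field 𝕜] [LinearOrder 𝕜]
    [IsStrictOrderedRing 𝕜] [AddCommGroup E] [Module 𝕜 E] {s : Set E} (hs : Convex 𝕜 s)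
    (h0 : (0 : E) ∈ s) {M : Multiset E} (hM : ∀ x ∈ M, x ∈ s) {N : ℕ}
    (hN : Multiset.card M ≤ N) : (N : 𝕜)⁻¹ • M.sum ∈ s := by
  induction M using Multiset.induction_on generalizing N with
  | empty => simpa using h0
  | cons a M ih =>
    obtain ⟨k, rfl⟩ : ∃ k, N = k + 1 :=
      Nat.exists_eq_add_one.mpr ((Multiset.card_pos.mpr Multiset.cons_ne_zero).trans_le hN)
    have hMk : Multiset.card M ≤ k := by simpa using hN
    have hsplit : ((k + 1 : ℕ) : 𝕜)⁻¹ • (a ::ₘ M).sum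
        = (k + 1 : 𝕜)⁻¹ • a + (k / (k + 1) : 𝕜) • ((k : 𝕜)⁻¹ • M.sum) := by
      rcases Nat.eq_zero_or_pos k with rfl | hk0
      · simp [Multiset.card_eq_zero.mp (by simpa using hMk)]
      · have : (k / (k + 1) : 𝕜) * (k : 𝕜)⁻¹ = (k + 1 : 𝕜)⁻¹ := by field_simp
        rw [Multiset.sum_cons, smul_add, smul_smul, this]
        push_cast
        rfl
    rw [hsplit]
    refine hs (hM a (Multiset.mem_cons_self a M))
      (ih (fun x hx ↦ hM x (Multiset.mem_cons_of_mem hx)) hMk) (by positivity) (by positivity) ?_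
    field_simp
    ring

theorem convex_setOf_mul_norm_lt_norm_mul_sub_one {δ : ℂ} {r : ℝ} (hδ : ‖δ‖ ≤ r) :
    Convex ℝ {u : ℂ | r * ‖u‖ < ‖δ * u - 1‖} := by
  have hr : 0 ≤ r := (norm_nonneg δ).trans hδ
  have hconv : ConvexOn ℝ Set.univ fun u : ℂ ↦ (r ^ 2 - ‖δ‖ ^ 2) * ‖u‖ ^ 2 + 2 * (δ * u).re :=
    (((convexOn_univ_norm.pow (fun _ _ ↦ norm_nonneg _) 2).smul
      (sub_nonneg.mpr (pow_le_pow_left₀ (norm_nonneg δ) hδ 2))).add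
      (((2 : ℝ) • Complex.reLm.comp ((LinearMap.mulLeft ℂ δ).restrictScalars ℝ)).convexOn
        convex_univ))
  have hset : {u : ℂ | r * ‖u‖ < ‖δ * u - 1‖}
      = {u ∈ Set.univ | (r ^ 2 - ‖δ‖ ^ 2) * ‖u‖ ^ 2 + 2 * (δ * u).re < 1} := by
    refine Set.ext fun u ↦ ?_
    simp only [Set.mem_ofPred_eq, Set.mem_univ, true_and]
    have hexpand : ‖δ * u - 1‖ ^ 2 = ‖δ‖ ^ 2 * ‖u‖ ^ 2 - 2 * (δ * u).re + 1 := by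
      simp only [← Complex.normSq_eq_norm_sq, Complex.normSq_sub, Complex.normSq_mul, map_one,
        mul_one]
      ring
    rw [← pow_lt_pow_iff_left₀ (by positivity) (norm_nonneg _) two_ne_zero, hexpand]
    constructor <;> intro h <;> linarith
  exact hset ▸ hconv.convex_lt 1

namespace Polynomial

variable {R : Type*} [CommRing R]

noncomputable def polarDerivative (N : ℕ) (z : R) (q : R[X]) : R[X] :=
  (N : R[X]) * q + (C z - X) * derivative q

@[simp]
theorem eval_polarDerivative (N : ℕ) (z : R) (q : R[X]) (w : R) :
    (polarDerivative N z q).eval w = N * q.eval w + (z - w) * (derivative q).eval w := by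
  simp [polarDerivative]

theorem eval_eq_eval_add_sub_mul_eval_derivative {q : R[X]} (hq : q.natDegree ≤ 1) (z w : R) :
    q.eval z = q.eval w + (z - w) * (derivative q).eval w := by
  rw [eq_X_add_C_of_natDegree_le_one hq]
  simp only [eval_add, eval_mul, eval_C, eval_X, derivative_add, derivative_mul, derivative_C,
    derivative_X, zero_mul, zero_add, mul_one, add_zero]
  ring

theorem eval_polarDerivative_ne_zero {q : ℂ[X]} {N : ℕ} (hN : N ≠ 0) (hdeg : q.natDegree ≤ N)
    {c : ℂ} {r : ℝ} (hq : ∀ x ∈ closedBall c r, q.eval x ≠ 0) {z w : ℂ}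
    (hz : z ∈ closedBall c r) (hw : w ∈ closedBall c r) : (polarDerivative N z q).eval w ≠ 0 := by
  intro h
  rw [eval_polarDerivative] at h
  have hqw := hq w hw
  have hwz : w - z ≠ 0 := by
    rintro hwz
    rw [show z - w = 0 by linear_combination -hwz, zero_mul, add_zero] at h
    exact mul_ne_zero (Nat.cast_ne_zero.mpr hN) hqw h
  -- `S` is `{0}` together with the image of the exterior of the disk under `x ↦ (w - x)⁻¹`.
  set S := {u : ℂ | r * ‖u‖ < ‖(w - c) * u - 1‖}
  have hmem : ∀ x, w - x ≠ 0 → ((w - x)⁻¹ ∈ S ↔ r < ‖x - c‖) := by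
    intro x hx
    have : (w - c) * (w - x)⁻¹ - 1 = (x - c) * (w - x)⁻¹ := by field_simp; ring
    simp only [S, Set.mem_ofPred_eq, this, norm_mul]
    exact mul_lt_mul_iff_left₀ (norm_pos_iff.mpr (inv_ne_zero hx))
  have hconv : Convex ℝ S :=
    convex_setOf_mul_norm_lt_norm_mul_sub_one (mem_closedBall_iff_norm.mp hw)
  have hroots : ∀ u ∈ q.roots.map fun ρ ↦ 1 / (w - ρ), u ∈ S := by
    simp only [Multiset.mem_map, one_div, forall_exists_index, and_imp]
    rintro _ ρ hρ rfl
    have hρ : ρ ∉ closedBall c r := fun h ↦ hq ρ h (isRoot_of_mem_roots hρ)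
    rw [hmem ρ (sub_ne_zero.mpr (by rintro rfl; exact hρ hw))]
    simpa [dist_eq_norm] using hρ
  have hsum : (N : ℝ)⁻¹ • (q.roots.map fun ρ ↦ 1 / (w - ρ)).sum = (w - z)⁻¹ := by
    have hlog := (IsAlgClosed.splits q).eval_derivative_eq_eval_mul_sum hqw
    have hN' : (N : ℂ) ≠ 0 := Nat.cast_ne_zero.mpr hN
    rw [Complex.real_smul, Complex.ofReal_inv, Complex.ofReal_natCast, inv_mul_eq_iff_eq_mul₀ hN']
    refine mul_left_cancel₀ (mul_ne_zero hqw hwz) ?_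
    rw [hlog] at h
    linear_combination -h - eval w q * N * mul_inv_cancel₀ hwz
  have := hconv.inv_natCast_smul_multiset_sum_mem (by simp [S]) hroots
    ((Multiset.card_map _ _).trans_le ((card_roots' q).trans hdeg))
  rw [hsum, hmem z hwz] at this
  exact (mem_closedBall_iff_norm.mp hz).not_gt this

end Polynomial

namespace MvPolynomial

section CommSemiring

variable {R σ τ : Type*} [CommSemiring R] {n : ℕ}

noncomputable def diagonal (p : MvPolynomial σ R) : Polynomial R :=
  aeval (fun _ ↦ Polynomial.X) p

theorem eval_diagonal (p : MvPolynomial σ R) (w : R) :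
    (diagonal p).eval w = eval (fun _ ↦ w) p := by
  induction p using MvPolynomial.induction_on with
  | C a => simp [diagonal]
  | add p q hp hq => simp_all [diagonal]
  | mul_X p i h => simp_all [diagonal]

@[simp]
theorem diagonal_rename (f : σ → τ) (p : MvPolynomial σ R) :
    diagonal (rename f p) = diagonal p :=
  aeval_rename _ _ _

theorem natDegree_diagonal_le [Fintype σ] {p : MvPolynomial σ R}
    (hp : ∀ i, p.degreeOf i ≤ 1) : (diagonal p).natDegree ≤ Fintype.card σ := by
  rw [diagonal, aeval_def, eval₂_eq']
  refine Polynomial.natDegree_sum_le_of_forall_le _ _ fun d hd ↦ ?_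
  rw [Finset.prod_pow_eq_pow_sum]
  refine (Polynomial.natDegree_C_mul_le _ _).trans ((Polynomial.natDegree_X_pow_le _).trans ?_)
  calc ∑ i, d i ≤ ∑ _i : σ, 1 :=
        Finset.sum_le_sum fun i _ ↦ (monomial_le_degreeOf i hd).trans (hp i)
    _ = Fintype.card σ := by simp

theorem derivative_diagonal [Fintype σ] (p : MvPolynomial σ R) :
    derivative (diagonal p) = ∑ i, diagonal (pderiv i p) := by
  classical
  induction p using MvPolynomial.induction_on with
  | C a => simp [diagonal]
  | add p q hp hq => simp_all [diagonal, Finset.sum_add_distrib]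
  | mul_X p i h =>
    simp only [diagonal] at h ⊢
    simp [h, pderiv_X, Pi.single_apply, apply_ite (aeval _), Finset.sum_add_distrib,
      Finset.mul_sum, mul_comm]

theorem IsSymmetric.pderiv_eq_rename_swap [DecidableEq σ] {p : MvPolynomial σ R}
    (hp : p.IsSymmetric) (i j : σ) : pderiv j p = rename (Equiv.swap i j) (pderiv i p) := by
  simpa [hp (Equiv.swap i j)] using pderiv_rename (Equiv.injective (Equiv.swap i j)) i p

theorem IsSymmetric.derivative_diagonal [Fintype σ] {p : MvPolynomial σ R}
    (hp : p.IsSymmetric) (i : σ) :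
    derivative (diagonal p) = Fintype.card σ • diagonal (pderiv i p) := by
  classical
  rw [MvPolynomial.derivative_diagonal, Finset.sum_congr rfl fun j _ ↦ by
    rw [hp.pderiv_eq_rename_swap i j, diagonal_rename], Finset.sum_const, Finset.card_univ]

theorem finSuccEquiv_pderiv_zero (p : MvPolynomial (Fin (n + 1)) R) :
    finSuccEquiv R n (pderiv 0 p) = derivative (finSuccEquiv R n p) := by
  induction p using MvPolynomial.induction_on with
  | C a => simp [finSuccEquiv_apply]
  | add p q hp hq => simp [hp, hq]
  | mul_X p i h =>
    cases i using Fin.cases with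
    | zero =>
      simp only [Derivation.leibniz, pderiv_X_self, smul_eq_mul, mul_one, map_add, map_mul,
        finSuccEquiv_X_zero, h, Polynomial.derivative_mul, Polynomial.derivative_X]
      ring
    | succ j => simp [h, finSuccEquiv_X_succ, pderiv_X_of_ne (Fin.succ_ne_zero j), mul_comm]

theorem finSuccEquiv_rename_decomposeFin_symm (σ : Equiv.Perm (Fin n))
    (p : MvPolynomial (Fin (n + 1)) R) :
    finSuccEquiv R n (rename (Equiv.Perm.decomposeFin.symm (0, σ)) p)
      = (finSuccEquiv R n p).map (rename (R := R) σ : _ →+* _) := by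
  suffices ((finSuccEquiv R n).toAlgHom.comp (rename (Equiv.Perm.decomposeFin.symm (0, σ))))
      = (Polynomial.mapAlgHom (rename σ)).comp (finSuccEquiv R n).toAlgHom from
    DFunLike.congr_fun this p
  refine algHom_ext fun i ↦ ?_
  cases i using Fin.cases with
  | zero => simp [finSuccEquiv_X_zero]
  | succ j => simp [finSuccEquiv_X_succ]

noncomputable def specializeZero (z : R) (p : MvPolynomial (Fin (n + 1)) R) :
    MvPolynomial (Fin n) R :=
  (finSuccEquiv R n p).eval (C z)

theorem eval_cons_eq_eval_specializeZero (y : R) (s : Fin n → R)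
    (p : MvPolynomial (Fin (n + 1)) R) :
    eval (Fin.cons y s) p = eval s (specializeZero y p) := by
  rw [eval_eq_eval_mv_eval', specializeZero, ← Polynomial.eval_map_apply, eval_C]

theorem IsSymmetric.specializeZero {p : MvPolynomial (Fin (n + 1)) R} (hp : p.IsSymmetric)
    (z : R) : (specializeZero z p).IsSymmetric := by
  intro σ
  rw [MvPolynomial.specializeZero, ← AlgHom.coe_toRingHom, ← Polynomial.eval_map_apply,
    ← finSuccEquiv_rename_decomposeFin_symm, hp, AlgHom.coe_toRingHom, rename_C]

theorem degreeOf_specializeZero_le (z : R) (p : MvPolynomial (Fin (n + 1)) R) (j : Fin n) :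
    (specializeZero z p).degreeOf j ≤ p.degreeOf j.succ := by
  rw [specializeZero, Polynomial.eval_eq_sum_range]
  refine (degreeOf_sum_le _ _ _).trans (Finset.sup_le fun i _ ↦ ?_)
  rw [← C_pow]
  exact (degreeOf_mul_C_le _ _ _).trans (degreeOf_coeff_finSuccEquiv p j i)

end CommSemiring

variable {R : Type*} [CommRing R] {n : ℕ}

theorem eval_cons_eq_eval_cons_add_sub_mul_eval_pderiv {p : MvPolynomial (Fin (n + 1)) R}
    (hp : p.degreeOf 0 ≤ 1) (z w : R) (s : Fin n → R) :
    eval (Fin.cons z s) p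
      = eval (Fin.cons w s) p + (z - w) * eval (Fin.cons w s) (pderiv 0 p) := by
  simp only [eval_eq_eval_mv_eval', finSuccEquiv_pderiv_zero, ← Polynomial.derivative_map]
  refine Polynomial.eval_eq_eval_add_sub_mul_eval_derivative
    (Polynomial.natDegree_map_le.trans ?_) z w
  rwa [natDegree_finSuccEquiv]

theorem IsSymmetric.eval_polarDerivative_diagonal {p : MvPolynomial (Fin (n + 1)) R}
    (hp : p.IsSymmetric) (h0 : p.degreeOf 0 ≤ 1) (z w : R) :
    (Polynomial.polarDerivative (n + 1) z (diagonal p)).eval w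
      = (n + 1 : ℕ) * eval (fun _ ↦ w) (MvPolynomial.specializeZero z p) := by
  have hcons : Fin.cons w (fun _ ↦ w) = fun _ : Fin (n + 1) ↦ w :=
    Fin.cons_self_tail (fun _ ↦ w)
  rw [← eval_cons_eq_eval_specializeZero, eval_cons_eq_eval_cons_add_sub_mul_eval_pderiv h0 z w,
    Polynomial.eval_polarDerivative, hp.derivative_diagonal 0, Fintype.card_fin,
    Polynomial.eval_smul, eval_diagonal, eval_diagonal, hcons, nsmul_eq_mul]
  ring

theorem IsSymmetric.eval_ne_zero_of_mem_closedBall {p : MvPolynomial (Fin n) ℂ}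
    (hp : p.IsSymmetric) (haff : ∀ i, p.degreeOf i ≤ 1) {c : ℂ} {r : ℝ} (hr : 0 ≤ r)
    (hdiag : ∀ w ∈ closedBall c r, eval (fun _ ↦ w) p ≠ 0) {v : Fin n → ℂ}
    (hv : ∀ i, v i ∈ closedBall c r) : eval v p ≠ 0 := by
  induction n with
  | zero => simpa [Subsingleton.elim v fun _ ↦ c] using hdiag c (mem_closedBall_self hr)
  | succ n ih =>
    rw [← Fin.cons_self_tail v, eval_cons_eq_eval_specializeZero]
    refine ih (hp.specializeZero _) (fun j ↦ (degreeOf_specializeZero_le _ _ j).trans (haff _))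
      (fun w hw h ↦ ?_) fun j ↦ hv j.succ
    have hq : ∀ x ∈ closedBall c r, (diagonal p).eval x ≠ 0 := fun x hx ↦ by
      rw [eval_diagonal]; exact hdiag x hx
    refine Polynomial.eval_polarDerivative_ne_zero n.succ_ne_zero
      ((natDegree_diagonal_le haff).trans_eq (Fintype.card_fin _)) hq (hv 0) hw ?_
    rw [hp.eval_polarDerivative_diagonal (haff 0), h, mul_zero]

end MvPolynomial

/-- Grace–Walsh–Szegő theorem, closed-disk case: a symmetric multiaffine
polynomial `f` in `n` variables evaluated at points of a closed disk `D`
takes the same value at some diagonal point `(ζ, …, ζ)` with `ζ ∈ D`. -/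
theorem grace_walsh_szego_closedDisk (n : ℕ) (f : MvPolynomial (Fin n) ℂ)
    (haff : ∀ i : Fin n, f.degreeOf i ≤ 1)
    (hsym : ∀ σ : Equiv.Perm (Fin n), MvPolynomial.rename σ f = f)
    (c : ℂ) (r : ℝ) (hr : 0 ≤ r)
    (ζ : Fin n → ℂ) (hζ : ∀ i, ζ i ∈ Metric.closedBall c r) :
    ∃ w ∈ Metric.closedBall c r,
      MvPolynomial.eval ζ f = MvPolynomial.eval (fun _ => w) f := by
  by_contra! hne
  set p := f - MvPolynomial.C (MvPolynomial.eval ζ f)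
  have hp : p.IsSymmetric := MvPolynomial.IsSymmetric.sub hsym (.C _)
  have haff' : ∀ i, p.degreeOf i ≤ 1 := fun i ↦
    (MvPolynomial.degreeOf_sub_le i _ _).trans (max_le (haff i) (by simp))
  refine hp.eval_ne_zero_of_mem_closedBall haff' hr (fun w hw ↦ ?_) hζ (by simp [p])
  rw [map_sub, MvPolynomial.eval_C, sub_ne_zero]
  exact (hne w hw).symm
end

section
/- Let t₁, t₂, t₃ be complex numbers with t₁t₂ + t₂t₃ + t₃t₁ = 3. Then the convex hull of {t₁, t₂, t₃} in ℂ (viewed as a real vector space) contains a real number, i.e. there exists x ∈ ℝ with (x : ℂ) in the convex hull of {t₁, t₂, t₃}. -/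
lemma seg_real {s : Set ℂ} (z w : ℂ) (hz : z ∈ convexHull ℝ s) (hw : w ∈ convexHull ℝ s)
    (h1 : z.im ≤ 0) (h2 : 0 ≤ w.im) : ∃ x : ℝ, (x : ℂ) ∈ convexHull ℝ s := by
  rcases eq_or_lt_of_le h1 with he | hlt
  · exact ⟨z.re, by rwa [show (z.re : ℂ) = z by exact Complex.ext rfl (by simp [← he])]⟩
  rcases eq_or_lt_of_le h2 with he | hlt2
  · exact ⟨w.re, by rwa [show (w.re : ℂ) = w by exact Complex.ext rfl (by simp [he])]⟩
  have hd : 0 < w.im - z.im := by linarith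
  obtain ⟨θ, hθ0, hθ1, hθim⟩ : ∃ θ : ℝ, 0 ≤ θ ∧ θ ≤ 1 ∧ θ * z.im + (1 - θ) * w.im = 0 :=
    ⟨w.im / (w.im - z.im), by positivity, by rw [div_le_one hd]; linarith,
      by field_simp; ring⟩
  have hp : θ • z + (1 - θ) • w ∈ convexHull ℝ s :=
    (convex_convexHull ℝ s) hz hw hθ0 (by linarith) (by ring)
  refine ⟨(θ • z + (1 - θ) • w).re, ?_⟩
  rwa [show (((θ • z + (1 - θ) • w).re : ℝ) : ℂ) = θ • z + (1 - θ) • w from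
    Complex.ext rfl (by simp only [Complex.ofReal_im, Complex.add_im, Complex.smul_im, smul_eq_mul]; linarith)]

lemma alg_contra (a1 a2 a3 b1 b2 b3 : ℝ) (hP : 0 < b1 * b2 + b2 * b3 + b3 * b1)
    (hc : b2 + b3 ≠ 0)
    (hC : a1 * (b2 + b3) + a2 * (b1 + b3) + a3 * (b1 + b2) = 0)
    (hre : a1 * a2 + a2 * a3 + a3 * a1 - (b1 * b2 + b2 * b3 + b3 * b1) = 3) : False := by
  have key : -((b2 + b3) ^ 2 * (a1 * a2 + a2 * a3 + a3 * a1)) =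
      -((b2 + b3) * (a1 * (b2 + b3) + a2 * (b1 + b3) + a3 * (b1 + b2)) * (a2 + a3))
      + (b1 * b2 + b2 * b3 + b3 * b1) * (a2 + a3) ^ 2 + (b3 * a2 - b2 * a3) ^ 2 := by ring
  rw [hC] at key
  have hc1 : 0 < (b2 + b3) ^ 2 := by positivity
  have h2 : 0 ≤ (b1 * b2 + b2 * b3 + b3 * b1) * (a2 + a3) ^ 2 + (b3 * a2 - b2 * a3) ^ 2 := by
    positivity
  have hQ : a1 * a2 + a2 * a3 + a3 * a1 ≤ 0 := by nlinarith [key, h2, hc1]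
  linarith

/-- If t₁t₂ + t₂t₃ + t₃t₁ = 3, then the convex hull of {t₁, t₂, t₃} in ℂ
contains a real number. -/
theorem convexHull_contains_real (t₁ t₂ t₃ : ℂ)
    (h : t₁ * t₂ + t₂ * t₃ + t₃ * t₁ = 3) :
    ∃ x : ℝ, (x : ℂ) ∈ convexHull ℝ ({t₁, t₂, t₃} : Set ℂ) := by
  have m1 : t₁ ∈ convexHull ℝ ({t₁, t₂, t₃} : Set ℂ) := subset_convexHull ℝ _ (by simp)
  have m2 : t₂ ∈ convexHull ℝ ({t₁, t₂, t₃} : Set ℂ) := subset_convexHull ℝ _ (by simp)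
  have m3 : t₃ ∈ convexHull ℝ ({t₁, t₂, t₃} : Set ℂ) := subset_convexHull ℝ _ (by simp)
  have hre : t₁.re * t₂.re - t₁.im * t₂.im + (t₂.re * t₃.re - t₂.im * t₃.im)
      + (t₃.re * t₁.re - t₃.im * t₁.im) = 3 := by
    have := congrArg Complex.re h
    simpa [Complex.add_re, Complex.mul_re] using this
  have him : t₁.re * t₂.im + t₁.im * t₂.re + (t₂.re * t₃.im + t₂.im * t₃.re)
      + (t₃.re * t₁.im + t₃.im * t₁.re) = 0 := by
    have := congrArg Complex.im h
    simpa [Complex.add_im, Complex.mul_im] using this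
  by_cases h1 : t₁.im ≤ 0
  · by_cases h2 : 0 ≤ t₂.im
    · exact seg_real t₁ t₂ m1 m2 h1 h2
    by_cases h3 : 0 ≤ t₃.im
    · exact seg_real t₁ t₃ m1 m3 h1 h3
    push_neg at h2 h3
    rcases eq_or_lt_of_le h1 with he | h1'
    · exact seg_real t₁ t₁ m1 m1 h1 he.ge
    -- all strictly negative imaginary parts: contradiction
    exfalso
    exact alg_contra t₁.re t₂.re t₃.re (-t₁.im) (-t₂.im) (-t₃.im)
      (by linarith [mul_pos (neg_pos.2 h1') (neg_pos.2 h2), mul_pos (neg_pos.2 h2) (neg_pos.2 h3),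
        mul_pos (neg_pos.2 h1') (neg_pos.2 h3)])
      (by intro hh; linarith) (by linear_combination -him) (by linear_combination hre)
  · push_neg at h1
    by_cases h2 : t₂.im ≤ 0
    · exact seg_real t₂ t₁ m2 m1 h2 h1.le
    by_cases h3 : t₃.im ≤ 0
    · exact seg_real t₃ t₁ m3 m1 h3 h1.le
    push_neg at h2 h3
    -- all strictly positive imaginary parts: contradiction
    exfalso
    exact alg_contra t₁.re t₂.re t₃.re t₁.im t₂.im t₃.im
      (by linarith [mul_pos h1 h2, mul_pos h2 h3, mul_pos h1 h3])
      (ne_of_gt (by positivity)) (by linear_combination him) (by linear_combination hre)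
end

section
/- Let t₁, t₂, t₃ be complex numbers with t₁t₂ + t₂t₃ + t₃t₁ = 3, and let D = {z ∈ ℂ : |z - c| ≤ r} be a closed disk containing t₁, t₂ and t₃. Then 1 ∈ D or −1 ∈ D. -/
/-!
The critical points `w, v` of `(X - t₁)(X - t₂)(X - t₃)` satisfy `w v = 1` and, by the
Gauss–Lucas theorem, lie in `D`. A disk containing `z` and `z⁻¹` contains `1` or `-1`: writing
`2(z - c) = x + y` and `2z(z⁻¹ - c) = x - y` with `x = (1 - c)(z + 1)`, `y = (1 + c)(z - 1)`, the
parallelogram law gives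
`(‖1 - c‖² - r²)‖z + 1‖² + (‖1 + c‖² - r²)‖z - 1‖² ≤ 0`.
-/

open Metric

namespace Complex

variable {c t x z z' : ℂ} {r : ℝ}

theorem re_div_sub_pos (ht : t ∈ closedBall c r) (hx : x ∉ closedBall c r) :
    0 < ((x - c) / (x - t)).re := by
  rw [mem_closedBall, dist_eq_norm] at ht hx
  have hxc : x - c ≠ 0 := fun h0 ↦ hx <| by simpa [h0] using (norm_nonneg _).trans ht
  have hq : ‖(t - c) / (x - c)‖ < 1 := by
    rw [norm_div, div_lt_one (norm_pos_iff.mpr hxc)]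
    linarith
  have hre : 0 < (1 - (t - c) / (x - c)).re := by
    rw [sub_re, one_re]
    linarith [re_le_norm ((t - c) / (x - c))]
  have hinv : (x - c) / (x - t) = (1 - (t - c) / (x - c))⁻¹ := by
    field_simp
    ring
  rw [hinv, inv_re]
  exact div_pos hre (normSq_pos.mpr fun h0 ↦ by simp [h0] at hre)

theorem sum_inv_sub_ne_zero_of_notMem_closedBall {ι : Type*} {s : Finset ι} (hs : s.Nonempty)
    {t : ι → ℂ} (ht : ∀ i ∈ s, t i ∈ closedBall c r) (hx : x ∉ closedBall c r) :
    ∑ i ∈ s, (x - t i)⁻¹ ≠ 0 := by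
  intro hsum
  have hpos : 0 < ((x - c) * ∑ i ∈ s, (x - t i)⁻¹).re := by
    rw [Finset.mul_sum, re_sum]
    exact Finset.sum_pos (fun i hi ↦ re_div_sub_pos (ht i hi) hx) hs
  simp [hsum] at hpos

theorem mem_closedBall_of_cubic_derivative_root {t₁ t₂ t₃ : ℂ} (h₁ : t₁ ∈ closedBall c r)
    (h₂ : t₂ ∈ closedBall c r) (h₃ : t₃ ∈ closedBall c r)
    (hx : (x - t₁) * (x - t₂) + (x - t₂) * (x - t₃) + (x - t₃) * (x - t₁) = 0) :
    x ∈ closedBall c r := by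
  by_contra hx'
  have hne : ∀ t ∈ closedBall c r, x - t ≠ 0 := fun t ht h0 ↦ hx' (sub_eq_zero.mp h0 ▸ ht)
  have hx₁ := hne _ h₁
  have hx₂ := hne _ h₂
  have hx₃ := hne _ h₃
  refine sum_inv_sub_ne_zero_of_notMem_closedBall (s := Finset.univ) (t := ![t₁, t₂, t₃])
    Finset.univ_nonempty (fun i _ ↦ by fin_cases i <;> assumption) hx' ?_
  simp only [Fin.sum_univ_three, Matrix.cons_val]
  field_simp
  linear_combination hx

theorem weighted_norm_sq_nonpos_of_mul_eq_one (hz : z ∈ closedBall c r)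
    (hz' : z' ∈ closedBall c r) (h : z * z' = 1) :
    (‖1 - c‖ ^ 2 - r ^ 2) * ‖z + 1‖ ^ 2 + (‖1 + c‖ ^ 2 - r ^ 2) * ‖z - 1‖ ^ 2 ≤ 0 := by
  rw [mem_closedBall, dist_eq_norm] at hz hz'
  have hr : 0 ≤ r := (norm_nonneg _).trans hz
  set x := (1 - c) * (z + 1)
  set y := (1 + c) * (z - 1)
  have hadd : ‖x + y‖ ≤ 2 * r := by
    calc ‖x + y‖ = ‖2 * (z - c)‖ := by congr 1; ring
      _ = 2 * ‖z - c‖ := by simp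
      _ ≤ 2 * r := by gcongr
  have hsub : ‖x - y‖ ≤ 2 * r * ‖z‖ := by
    calc ‖x - y‖ = ‖2 * z * (z' - c)‖ := by congr 1; linear_combination (-2 : ℂ) * h
      _ = 2 * ‖z‖ * ‖z' - c‖ := by simp
      _ ≤ 2 * r * ‖z‖ := by rw [mul_right_comm]; gcongr
  have hxy := parallelogram_law_with_norm ℝ x y
  have hz1 := parallelogram_law_with_norm ℝ z 1
  simp only [x, y, norm_mul, norm_one] at hxy hz1
  nlinarith [mul_le_mul hadd hadd (norm_nonneg _) (by positivity),
    mul_le_mul hsub hsub (norm_nonneg _) (by positivity)]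

theorem one_mem_or_neg_one_mem_closedBall_of_mul_eq_one (hz : z ∈ closedBall c r)
    (hz' : z' ∈ closedBall c r) (h : z * z' = 1) :
    (1 : ℂ) ∈ closedBall c r ∨ (-1 : ℂ) ∈ closedBall c r := by
  have key := weighted_norm_sq_nonpos_of_mul_eq_one hz hz' h
  have hr : 0 ≤ r := nonneg_of_mem_closedBall hz
  by_contra! ⟨h₁, h₂⟩
  rw [mem_closedBall, dist_eq_norm, not_le] at h₁ h₂
  rw [← norm_neg, neg_sub, sub_neg_eq_add, add_comm] at h₂
  have hA : 0 < ‖1 - c‖ ^ 2 - r ^ 2 := by nlinarith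
  have hB : 0 < ‖1 + c‖ ^ 2 - r ^ 2 := by nlinarith
  rcases eq_or_ne z (-1) with rfl | hz1
  · norm_num at key
    linarith
  · have : 0 < ‖z + 1‖ := norm_pos_iff.mpr fun h0 ↦ hz1 (eq_neg_of_add_eq_zero_left h0)
    nlinarith [mul_pos hA (pow_pos this 2), mul_nonneg hB.le (sq_nonneg ‖z - 1‖)]

end Complex

theorem closedDisk_contains_pm_one_general (t₁ t₂ t₃ : ℂ)
    (h : t₁ * t₂ + t₂ * t₃ + t₃ * t₁ = 3)
    (c : ℂ) (r : ℝ)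
    (h₁ : t₁ ∈ Metric.closedBall c r) (h₂ : t₂ ∈ Metric.closedBall c r)
    (h₃ : t₃ ∈ Metric.closedBall c r) :
    (1 : ℂ) ∈ Metric.closedBall c r ∨ (-1 : ℂ) ∈ Metric.closedBall c r := by
  obtain ⟨s, hs⟩ := IsAlgClosed.exists_pow_nat_eq ((t₁ + t₂ + t₃) ^ 2 - 9) two_pos
  -- `(t₁ + t₂ + t₃ ± s) / 3` are the roots of the derivative `3X² - 2(t₁ + t₂ + t₃)X + 3`
  have hw := Complex.mem_closedBall_of_cubic_derivative_root
    (x := (t₁ + t₂ + t₃ + s) / 3) h₁ h₂ h₃ (by linear_combination (1 / 3 : ℂ) * hs + h)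
  have hv := Complex.mem_closedBall_of_cubic_derivative_root
    (x := (t₁ + t₂ + t₃ - s) / 3) h₁ h₂ h₃ (by linear_combination (1 / 3 : ℂ) * hs + h)
  exact Complex.one_mem_or_neg_one_mem_closedBall_of_mul_eq_one hw hv
    (by linear_combination (-1 / 9 : ℂ) * hs)

/-- If t₁t₂ + t₂t₃ + t₃t₁ = 3 and a closed disk D contains t₁, t₂, t₃, then
D contains 1 or -1. -/
theorem closedDisk_contains_pm_one (t₁ t₂ t₃ : ℂ)
    (h : t₁ * t₂ + t₂ * t₃ + t₃ * t₁ = 3)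
    (c : ℂ) (r : ℝ) (hr : 0 ≤ r)
    (h₁ : t₁ ∈ Metric.closedBall c r) (h₂ : t₂ ∈ Metric.closedBall c r)
    (h₃ : t₃ ∈ Metric.closedBall c r) :
    (1 : ℂ) ∈ Metric.closedBall c r ∨ (-1 : ℂ) ∈ Metric.closedBall c r :=
  closedDisk_contains_pm_one_general t₁ t₂ t₃ h c r h₁ h₂ h₃
end

section
/- Let t₁, t₂, t₃ be complex numbers with t₁t₂ + t₂t₃ + t₃t₁ = 3, and let D = {z ∈ ℂ : re(α·z) ≤ s} (α ∈ ℂ nonzero, s ∈ ℝ) be a closed half-plane containing t₁, t₂ and t₃. Then 1 ∈ D or −1 ∈ D. -/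
/-- Half-plane version of Gauss–Lucas for a "root of the derivative":
if t₁, t₂, t₃ lie in the half-plane {z : re(αz) ≤ s} and r satisfies
(r−t₂)(r−t₃)+(r−t₁)(r−t₃)+(r−t₁)(r−t₂) = 0, then r lies in the half-plane. -/
theorem aux_root_in_halfplane (α : ℂ) (s : ℝ) (t₁ t₂ t₃ r : ℂ)
    (h₁ : (α * t₁).re ≤ s) (h₂ : (α * t₂).re ≤ s) (h₃ : (α * t₃).re ≤ s)
    (hr : (r - t₂) * (r - t₃) + (r - t₁) * (r - t₃) + (r - t₁) * (r - t₂) = 0) :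
    (α * r).re ≤ s := by
  by_contra hc
  push_neg at hc
  set u₁ := r - t₁ with hu₁
  set u₂ := r - t₂ with hu₂
  set u₃ := r - t₃ with hu₃
  have p₁ : 0 < (α * u₁).re := by
    have e : α * u₁ = α * r - α * t₁ := by rw [hu₁]; ring
    rw [e, Complex.sub_re]; linarith
  have p₂ : 0 < (α * u₂).re := by
    have e : α * u₂ = α * r - α * t₂ := by rw [hu₂]; ring
    rw [e, Complex.sub_re]; linarith
  have p₃ : 0 < (α * u₃).re := by
    have e : α * u₃ = α * r - α * t₃ := by rw [hu₃]; ring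
    rw [e, Complex.sub_re]; linarith
  have n₁ : 0 < Complex.normSq u₁ := by
    refine Complex.normSq_pos.2 fun h0 => ?_
    rw [h0, mul_zero] at p₁; simp at p₁
  have n₂ : 0 < Complex.normSq u₂ := by
    refine Complex.normSq_pos.2 fun h0 => ?_
    rw [h0, mul_zero] at p₂; simp at p₂
  have n₃ : 0 < Complex.normSq u₃ := by
    refine Complex.normSq_pos.2 fun h0 => ?_
    rw [h0, mul_zero] at p₃; simp at p₃
  have key : (starRingEnd ℂ) α * (u₂ * u₃ + u₁ * u₃ + u₁ * u₂) *
      (starRingEnd ℂ) (u₁ * u₂ * u₃)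
      = (starRingEnd ℂ) (α * u₁) * (Complex.normSq u₂ : ℂ) * (Complex.normSq u₃ : ℂ)
      + (starRingEnd ℂ) (α * u₂) * (Complex.normSq u₁ : ℂ) * (Complex.normSq u₃ : ℂ)
      + (starRingEnd ℂ) (α * u₃) * (Complex.normSq u₁ : ℂ) * (Complex.normSq u₂ : ℂ) := by
    simp only [← Complex.mul_conj, map_mul]
    ring
  have hzero : ((starRingEnd ℂ) α * (u₂ * u₃ + u₁ * u₃ + u₁ * u₂) *
      (starRingEnd ℂ) (u₁ * u₂ * u₃)).re = 0 := by
    rw [hr]; simp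
  rw [key] at hzero
  have hre : ((starRingEnd ℂ) (α * u₁) * (Complex.normSq u₂ : ℂ) * (Complex.normSq u₃ : ℂ)
      + (starRingEnd ℂ) (α * u₂) * (Complex.normSq u₁ : ℂ) * (Complex.normSq u₃ : ℂ)
      + (starRingEnd ℂ) (α * u₃) * (Complex.normSq u₁ : ℂ) * (Complex.normSq u₂ : ℂ)).re
      = (α * u₁).re * Complex.normSq u₂ * Complex.normSq u₃
      + (α * u₂).re * Complex.normSq u₁ * Complex.normSq u₃
      + (α * u₃).re * Complex.normSq u₁ * Complex.normSq u₂ := by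
    simp [Complex.add_re, Complex.mul_re, Complex.ofReal_re, Complex.ofReal_im,
      Complex.conj_re, Complex.conj_im]
  rw [hre] at hzero
  nlinarith [mul_pos (mul_pos p₁ n₂) n₃, mul_pos (mul_pos p₂ n₁) n₃,
    mul_pos (mul_pos p₃ n₁) n₂]

/-- If t₁t₂ + t₂t₃ + t₃t₁ = 3 and a closed half-plane D = {z : re(αz) ≤ s}
contains t₁, t₂, t₃, then D contains 1 or -1. -/
theorem halfPlane_contains_pm_one (t₁ t₂ t₃ : ℂ)
    (h : t₁ * t₂ + t₂ * t₃ + t₃ * t₁ = 3)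
    (α : ℂ) (hα : α ≠ 0) (s : ℝ)
    (h₁ : t₁ ∈ {z : ℂ | (α * z).re ≤ s}) (h₂ : t₂ ∈ {z : ℂ | (α * z).re ≤ s})
    (h₃ : t₃ ∈ {z : ℂ | (α * z).re ≤ s}) :
    (1 : ℂ) ∈ {z : ℂ | (α * z).re ≤ s} ∨ (-1 : ℂ) ∈ {z : ℂ | (α * z).re ≤ s} := by
  simp only [Set.mem_setOf_eq] at h₁ h₂ h₃ ⊢
  by_contra hcon
  push_neg at hcon
  obtain ⟨hc1, hc2⟩ := hcon
  rw [mul_one] at hc1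
  have hc2' : s < -α.re := by
    have e : α * (-1) = -α := by ring
    rw [e, Complex.neg_re] at hc2; linarith
  have hc1' : s < α.re := hc1
  -- square root of the discriminant
  obtain ⟨w, hw⟩ := IsAlgClosed.exists_pow_nat_eq ((t₁ + t₂ + t₃) ^ 2 - 9) (n := 2) two_pos
  set σ := t₁ + t₂ + t₃ with hσ
  set r₁ := (σ + w) / 3 with hr₁def
  set r₂ := (σ - w) / 3 with hr₂def
  have hr₁ : (r₁ - t₂) * (r₁ - t₃) + (r₁ - t₁) * (r₁ - t₃) + (r₁ - t₁) * (r₁ - t₂) = 0 := by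
    rw [hr₁def, hσ]
    linear_combination (1 / 3 : ℂ) * hw + h
  have hr₂ : (r₂ - t₂) * (r₂ - t₃) + (r₂ - t₁) * (r₂ - t₃) + (r₂ - t₁) * (r₂ - t₂) = 0 := by
    rw [hr₂def, hσ]
    linear_combination (1 / 3 : ℂ) * hw + h
  have hprod : r₁ * r₂ = 1 := by
    rw [hr₁def, hr₂def, hσ]
    linear_combination (-1 / 9 : ℂ) * hw
  have hs₁ : (α * r₁).re ≤ s := aux_root_in_halfplane α s t₁ t₂ t₃ r₁ h₁ h₂ h₃ hr₁
  have hs₂ : (α * r₂).re ≤ s := aux_root_in_halfplane α s t₁ t₂ t₃ r₂ h₁ h₂ h₃ hr₂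
  -- key identity: α r₁ + |r₁|² α r₂ = α (r₁ + conj r₁)
  have kid : α * r₁ + (Complex.normSq r₁ : ℂ) * (α * r₂)
      = α * (r₁ + (starRingEnd ℂ) r₁) := by
    rw [← Complex.mul_conj]
    linear_combination (α * (starRingEnd ℂ) r₁) * hprod
  have kre : (α * r₁).re + Complex.normSq r₁ * (α * r₂).re = 2 * r₁.re * α.re := by
    have l : ((α * r₁ + (Complex.normSq r₁ : ℂ) * (α * r₂))).re
        = (α * r₁).re + Complex.normSq r₁ * (α * r₂).re := by
      rw [Complex.add_re, Complex.re_ofReal_mul]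
    have rr : (α * (r₁ + (starRingEnd ℂ) r₁)).re = 2 * r₁.re * α.re := by
      rw [Complex.add_conj, Complex.mul_re]
      simp [Complex.ofReal_re, Complex.ofReal_im]
      ring
    rw [← l, kid, rr]
  have hn : Complex.normSq r₁ = r₁.re * r₁.re + r₁.im * r₁.im := Complex.normSq_apply r₁
  have hnn : 0 ≤ Complex.normSq r₁ := Complex.normSq_nonneg r₁
  have hs0 : s < 0 := by
    rcases abs_cases α.re with ⟨he, _⟩ | ⟨he, _⟩ <;> nlinarith [abs_nonneg α.re]
  have hsa : s < -|α.re| := by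
    rcases abs_cases α.re with ⟨he, _⟩ | ⟨he, _⟩ <;> linarith
  have h2x : 2 * |r₁.re| ≤ 1 + r₁.re ^ 2 := by
    nlinarith [sq_nonneg (|r₁.re| - 1), sq_abs r₁.re]
  have hmul : Complex.normSq r₁ * (α * r₂).re ≤ Complex.normSq r₁ * s :=
    mul_le_mul_of_nonneg_left hs₂ hnn
  have step1 : 2 * r₁.re * α.re ≤ s * (1 + Complex.normSq r₁) := by nlinarith
  have step2 : s * (1 + Complex.normSq r₁) ≤ s * (1 + r₁.re ^ 2) := by nlinarith [sq_nonneg r₁.im]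
  have step3 : s * (1 + r₁.re ^ 2) < -|α.re| * (1 + r₁.re ^ 2) := by nlinarith [sq_nonneg r₁.re]
  have step4 : -|α.re| * (1 + r₁.re ^ 2) ≤ -(|α.re| * (2 * |r₁.re|)) := by
    nlinarith [mul_le_mul_of_nonneg_left h2x (abs_nonneg α.re)]
  have habs : |2 * r₁.re * α.re| = |α.re| * (2 * |r₁.re|) := by
    rw [abs_mul, abs_mul, abs_two]; ring
  have step5 : -(|α.re| * (2 * |r₁.re|)) ≤ 2 * r₁.re * α.re := by
    rw [← habs]; exact neg_abs_le _
  linarith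
end

section
/- Every nonzero homogeneous polynomial g of degree 3 in two variables u, v over ℂ is equivalent under the action of GL(2, ℂ) (by linear substitution of the variables) to a nonzero scalar multiple of exactly one of the three normal forms uv² − u³, u²v − u³, and v³; that is, there exist an invertible 2×2 complex matrix M and a nonzero c ∈ ℂ such that substituting (u, v) ↦ M·(u, v) in g yields c·(uv² − u³), c·(u²v − u³), or c·v³, according to whether g has three distinct roots, one double and one simple root, or a triple root in ℂP¹. -/
/-!
Over an algebraically closed field a binary cubic splits into three linear factors: dehomogenize,
split, homogenize back. GL(2) sends any two independent linear forms to any two others, which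
brings the product to `v³`, `u²(v - u)` or `u(v - u)(v + u)` according to how many factors are
proportional. For uniqueness, a linear substitution, even a singular one, preserves both being a
multiple of a cube `ℓ³` and having a square factor `ℓ²ℓ'`; `v³` is a cube, `u²v - u³` has a square
factor but is not a cube, and `uv² - u³` has no square factor.
-/

open MvPolynomial Matrix

section LinearForms

variable {σ R : Type*} [Fintype σ] [CommSemiring R]

noncomputable def linForm : (σ → R) →ₗ[R] MvPolynomial σ R where
  toFun ℓ := ∑ j, C (ℓ j) * X j
  map_add' ℓ ℓ' := by simp [add_mul, Finset.sum_add_distrib]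
  map_smul' c ℓ := by simp [Finset.smul_sum, smul_eq_C_mul, mul_assoc]

/-- The substitution `f ↦ f(M x)` of the statement, `bind₁ (fun i => ∑ j, C (M i j) * X j)`,
up to `rfl`. -/
noncomputable def linSubst (M : Matrix σ σ R) : MvPolynomial σ R →ₐ[R] MvPolynomial σ R :=
  bind₁ fun i => linForm (M i)

lemma linSubst_linForm (M : Matrix σ σ R) (ℓ : σ → R) :
    linSubst M (linForm ℓ) = linForm (ℓ ᵥ* M) := by
  simp only [linSubst, linForm, LinearMap.coe_mk, AddHom.coe_mk, map_sum, map_mul, bind₁_C_right,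
    bind₁_X_right, vecMul, dotProduct, Finset.mul_sum, Finset.sum_mul, mul_assoc]
  exact Finset.sum_comm

lemma linSubst_linSubst (A B : Matrix σ σ R) (f : MvPolynomial σ R) :
    linSubst A (linSubst B f) = linSubst (B * A) f := by
  simp only [linSubst, bind₁_bind₁]
  congr 2
  funext i
  rw [mul_apply_eq_vecMul]
  exact linSubst_linForm A (B i)

def IsLinFormCube (f : MvPolynomial σ R) : Prop :=
  ∃ (c : R) (ℓ : σ → R), f = c • linForm ℓ ^ 3

def HasLinFormSqFactor (f : MvPolynomial σ R) : Prop :=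
  ∃ ℓ ℓ' : σ → R, f = linForm ℓ ^ 2 * linForm ℓ'

lemma IsLinFormCube.hasLinFormSqFactor {f : MvPolynomial σ R} (h : IsLinFormCube f) :
    HasLinFormSqFactor f := by
  obtain ⟨c, ℓ, rfl⟩ := h
  exact ⟨ℓ, c • ℓ, by rw [map_smul, mul_smul_comm, pow_succ]⟩

lemma IsLinFormCube.smul_linSubst {f : MvPolynomial σ R} (h : IsLinFormCube f) (c : R)
    (M : Matrix σ σ R) : IsLinFormCube (c • linSubst M f) := by
  obtain ⟨a, ℓ, rfl⟩ := h
  exact ⟨c * a, ℓ ᵥ* M, by rw [map_smul, map_pow, linSubst_linForm, smul_smul]⟩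

lemma HasLinFormSqFactor.smul_linSubst {f : MvPolynomial σ R} (h : HasLinFormSqFactor f)
    (c : R) (M : Matrix σ σ R) : HasLinFormSqFactor (c • linSubst M f) := by
  obtain ⟨ℓ, ℓ', rfl⟩ := h
  exact ⟨ℓ ᵥ* M, c • (ℓ' ᵥ* M), by
    rw [map_mul, map_pow, linSubst_linForm, linSubst_linForm, map_smul, mul_smul_comm]⟩

end LinearForms

section BinaryForms

variable {R K : Type*} [CommRing R] [Field K]

lemma linForm_fin_two (ℓ : Fin 2 → R) : linForm ℓ = C (ℓ 0) * X 0 + C (ℓ 1) * X 1 := by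
  simp [linForm, Fin.sum_univ_two]

lemma det_of_fin_two (ℓ ℓ' : Fin 2 → R) : (of ![ℓ, ℓ']).det = ℓ 0 * ℓ' 1 - ℓ 1 * ℓ' 0 := by
  simp [det_fin_two]

noncomputable def cubicNormalForm : Fin 3 → MvPolynomial (Fin 2) R :=
  ![X 0 * X 1 ^ 2 - X 0 ^ 3, X 0 ^ 2 * X 1 - X 0 ^ 3, X 1 ^ 3]

lemma natDegree_aeval_X_one_le {n : ℕ} {g : MvPolynomial (Fin 2) R} (hg : g.IsHomogeneous n) :
    (aeval ![(Polynomial.X : Polynomial R), 1] g).natDegree ≤ n := by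
  rw [g.as_sum, map_sum]
  refine Polynomial.natDegree_sum_le_of_forall_le _ _ fun m hm => ?_
  have hdeg : m 0 + m 1 = n := by
    simpa [Finsupp.weight_apply, Finsupp.sum_fintype] using hg (mem_support_iff.mp hm)
  rw [aeval_monomial, Finsupp.prod_fintype _ _ (by simp), Fin.prod_univ_two]
  simp only [cons_val_zero, cons_val_one, one_pow, mul_one, ← Polynomial.C_eq_algebraMap]
  exact (Polynomial.natDegree_C_mul_X_pow_le _ _).trans (by omega)

lemma homogenize_X_sub_C (r : R) :
    (Polynomial.X - Polynomial.C r).homogenize 1 = linForm ![1, -r] := by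
  simp [linForm_fin_two, sub_eq_add_neg]

lemma homogenize_prod_X_sub_C [Nontrivial R] (s : Multiset R) :
    (s.map fun r => Polynomial.X - Polynomial.C r).prod.homogenize (Multiset.card s) =
      (s.map fun r => linForm ![1, -r]).prod := by
  induction s using Multiset.induction_on with
  | empty => simp
  | cons r s ih =>
    rw [Multiset.map_cons, Multiset.prod_cons, Multiset.card_cons, add_comm,
      Polynomial.homogenize_mul _ _ (Polynomial.natDegree_X_sub_C_le r)
        (Polynomial.natDegree_multiset_prod_X_sub_C_eq_card s).le,
      homogenize_X_sub_C, ih, Multiset.map_cons, Multiset.prod_cons]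

/-- The roots of `g(t, 1)` give the factors `X 0 - r • X 1`; the `n - deg g(t, 1)` missing roots
lie at infinity and give factors `X 1`. -/
lemma MvPolynomial.IsHomogeneous.exists_eq_smul_prod_linForm [IsAlgClosed K] {n : ℕ}
    {g : MvPolynomial (Fin 2) K} (hg : g.IsHomogeneous n) (hg0 : g ≠ 0) :
    ∃ (a : K) (s : Multiset (Fin 2 → K)), a ≠ 0 ∧ Multiset.card s = n ∧ (∀ ℓ ∈ s, ℓ ≠ 0) ∧
      g = a • (s.map linForm).prod := by
  set p := MvPolynomial.aeval ![(Polynomial.X : Polynomial K), 1] g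
  have hpg : p.homogenize n = g := Polynomial.homogenize_eq_of_isHomogeneous hg rfl
  have hdeg : p.natDegree ≤ n := natDegree_aeval_X_one_le hg
  have hp0 : p ≠ 0 := fun hp => hg0 (by rw [← hpg, hp, Polynomial.homogenize_zero])
  have hroots : Multiset.card p.roots = p.natDegree := IsAlgClosed.card_roots_eq_natDegree
  refine ⟨p.leadingCoeff, p.roots.map (fun r => ![1, -r]) +
    Multiset.replicate (n - p.natDegree) ![0, 1], Polynomial.leadingCoeff_ne_zero.mpr hp0,
    by simp [hroots, hdeg], ?_, ?_⟩
  · simp only [Multiset.mem_add, Multiset.mem_map, Multiset.mem_replicate]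
    rintro ℓ (⟨r, -, rfl⟩ | ⟨-, rfl⟩) h
    · exact one_ne_zero (congrFun h 0)
    · exact one_ne_zero (congrFun h 1)
  · calc g = (Polynomial.C p.leadingCoeff *
          ((p.roots.map fun r => Polynomial.X - Polynomial.C r).prod * 1)).homogenize
            (Multiset.card p.roots + (n - p.natDegree)) := by
          rw [mul_one, Polynomial.C_leadingCoeff_mul_prod_multiset_X_sub_C hroots, hroots,
            Nat.add_sub_cancel' hdeg, hpg]
      _ = _ := by
          rw [Polynomial.homogenize_C_mul, Polynomial.homogenize_mul _ _
            (Polynomial.natDegree_multiset_prod_X_sub_C_eq_card _).le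
            (Polynomial.natDegree_one.trans_le (Nat.zero_le _)), homogenize_prod_X_sub_C]
          simp [Multiset.map_map, linForm_fin_two, smul_eq_C_mul]

lemma exists_GL_vecMul_eq {n : Type*} [Fintype n] [DecidableEq n] {L T : Matrix n n K}
    (hL : L.det ≠ 0) (hT : T.det ≠ 0) : ∃ M : GL n K, ∀ i, L i ᵥ* (M : Matrix n n K) = T i := by
  refine ⟨(GeneralLinearGroup.mkOfDetNeZero L hL)⁻¹ * GeneralLinearGroup.mkOfDetNeZero T hT,
    fun i => ?_⟩
  have hLT : L * (L⁻¹ * T) = T := mul_nonsing_inv_cancel_left L T hL.isUnit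
  rw [← mul_apply_eq_vecMul, Units.val_mul, coe_units_inv, GeneralLinearGroup.val_mkOfDetNeZero,
    GeneralLinearGroup.val_mkOfDetNeZero, hLT]

lemma exists_GL_vecMul_eq_pair {ℓ ℓ' m m' : Fin 2 → K} (hℓ : (of ![ℓ, ℓ']).det ≠ 0)
    (hm : (of ![m, m']).det ≠ 0) :
    ∃ M : GL (Fin 2) K, ℓ ᵥ* (M : Matrix (Fin 2) (Fin 2) K) = m ∧
      ℓ' ᵥ* (M : Matrix (Fin 2) (Fin 2) K) = m' := by
  obtain ⟨M, hM⟩ := exists_GL_vecMul_eq hℓ hm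
  exact ⟨M, hM 0, hM 1⟩

lemma exists_det_ne_zero {ℓ : Fin 2 → K} (hℓ : ℓ ≠ 0) : ∃ ℓ', (of ![ℓ, ℓ']).det ≠ 0 := by
  obtain ⟨i, hi⟩ := Function.ne_iff.mp hℓ
  fin_cases i
  · exact ⟨![0, 1], by simpa [det_of_fin_two] using hi⟩
  · exact ⟨![1, 0], by simpa [det_of_fin_two] using hi⟩

lemma exists_eq_smul_of_det_eq_zero {ℓ ℓ' : Fin 2 → K} (hℓ : ℓ ≠ 0) (hℓ' : ℓ' ≠ 0)
    (h : (of ![ℓ, ℓ']).det = 0) : ∃ s : K, s ≠ 0 ∧ ℓ' = s • ℓ := by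
  suffices ∃ s : K, ℓ' = s • ℓ by
    obtain ⟨s, rfl⟩ := this
    exact ⟨s, left_ne_zero_of_smul hℓ', rfl⟩
  rw [det_of_fin_two] at h
  obtain ⟨i, hi⟩ := Function.ne_iff.mp hℓ
  refine ⟨ℓ' i / ℓ i, funext fun j => ?_⟩
  rw [Pi.smul_apply, smul_eq_mul, div_mul_eq_mul_div, eq_div_iff hi]
  fin_cases i <;> fin_cases j
  · rfl
  · show ℓ' 1 * ℓ 0 = ℓ' 0 * ℓ 1
    linear_combination h
  · show ℓ' 0 * ℓ 1 = ℓ' 1 * ℓ 0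
    linear_combination -h
  · rfl

lemma exists_linSubst_linForm_pow_three {ℓ : Fin 2 → K} (hℓ : ℓ ≠ 0) :
    ∃ M : GL (Fin 2) K,
      linSubst (M : Matrix (Fin 2) (Fin 2) K) (linForm ℓ ^ 3) = cubicNormalForm 2 := by
  obtain ⟨ℓ', hℓ'⟩ := exists_det_ne_zero hℓ
  obtain ⟨M, hM, -⟩ := exists_GL_vecMul_eq_pair (m := ![0, 1]) (m' := ![1, 0]) hℓ'
    (by simp [det_of_fin_two])
  exact ⟨M, by rw [map_pow, linSubst_linForm, hM]; simp [linForm_fin_two, cubicNormalForm]⟩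

lemma exists_linSubst_linForm_sq_mul {ℓ ℓ' : Fin 2 → K} (h : (of ![ℓ, ℓ']).det ≠ 0) :
    ∃ M : GL (Fin 2) K, linSubst (M : Matrix (Fin 2) (Fin 2) K) (linForm ℓ ^ 2 * linForm ℓ') =
      cubicNormalForm 1 := by
  obtain ⟨M, hM, hM'⟩ := exists_GL_vecMul_eq_pair (m := ![1, 0]) (m' := ![-1, 1]) h
    (by simp [det_of_fin_two])
  refine ⟨M, ?_⟩
  rw [map_mul, map_pow, linSubst_linForm, linSubst_linForm, hM, hM']
  simp only [linForm_fin_two, cubicNormalForm, cons_val_zero, cons_val_one, cons_val_fin_one,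
    map_one, map_zero, map_neg]
  ring

lemma exists_linSubst_linForm_mul_mul (h2 : (2 : K) ≠ 0) {ℓ₁ ℓ₂ ℓ₃ : Fin 2 → K}
    (h₁₂ : (of ![ℓ₁, ℓ₂]).det ≠ 0) (h₁₃ : (of ![ℓ₁, ℓ₃]).det ≠ 0)
    (h₂₃ : (of ![ℓ₂, ℓ₃]).det ≠ 0) :
    ∃ (M : GL (Fin 2) K) (c : K), c ≠ 0 ∧ linSubst (M : Matrix (Fin 2) (Fin 2) K)
      (linForm ℓ₁ * linForm ℓ₂ * linForm ℓ₃) = c • cubicNormalForm 0 := by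
  have ha : (of ![ℓ₃, ℓ₂]).det ≠ 0 := by
    rw [det_of_fin_two] at h₂₃ ⊢
    exact fun h => h₂₃ (by linear_combination -h)
  set D := (of ![ℓ₁, ℓ₂]).det
  set a := (of ![ℓ₃, ℓ₂]).det
  set b := (of ![ℓ₁, ℓ₃]).det
  have hcramer : ℓ₃ = D⁻¹ • (a • ℓ₁ + b • ℓ₂) := by
    rw [eq_inv_smul_iff₀ h₁₂]
    funext i
    fin_cases i <;>
      simp only [D, a, b, det_of_fin_two, Pi.smul_apply, smul_eq_mul, Pi.add_apply, Fin.zero_eta,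
        Fin.mk_one] <;> ring
  -- Send `ℓ₁ ↦ 2b • u` and `ℓ₂ ↦ a • (v - u)`; then `ℓ₃ ↦ (ab / D) • (u + v)` by `hcramer`,
  -- and `u(v - u)(v + u) = uv² - u³`.
  obtain ⟨M, hM₁, hM₂⟩ := exists_GL_vecMul_eq_pair (m := (2 * b) • ![1, 0])
    (m' := a • ![-1, 1]) h₁₂ (by simp [det_of_fin_two, h2, ha, h₁₃])
  refine ⟨M, 2 * a ^ 2 * b ^ 2 / D, by simp [h2, ha, h₁₃, h₁₂], ?_⟩
  have hM₃ : ℓ₃ ᵥ* (M : Matrix (Fin 2) (Fin 2) K) = (a * b / D) • ![1, 1] := by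
    rw [hcramer, smul_vecMul, add_vecMul, smul_vecMul, smul_vecMul, hM₁, hM₂]
    funext j
    fin_cases j <;>
      simp only [Pi.add_apply, Pi.smul_apply, smul_eq_mul, Fin.zero_eta, Fin.mk_one, cons_val_zero,
        cons_val_one, cons_val_fin_one] <;> ring
  have hprod : linForm ![(1 : K), 0] * linForm ![-1, 1] * linForm ![1, 1] = cubicNormalForm 0 := by
    simp only [linForm_fin_two, cubicNormalForm, cons_val_zero, cons_val_one, cons_val_fin_one,
      map_one, map_zero, map_neg]
    ring
  rw [map_mul, map_mul, linSubst_linForm, linSubst_linForm, linSubst_linForm, hM₁, hM₂, hM₃]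
  simp only [map_smul, smul_mul_assoc, mul_smul_comm, smul_smul, hprod]
  congr 1
  ring

lemma exists_linSubst_linForm_mul_mul_eq_smul_cubicNormalForm (h2 : (2 : K) ≠ 0)
    {ℓ₁ ℓ₂ ℓ₃ : Fin 2 → K} (hℓ₁ : ℓ₁ ≠ 0) (hℓ₂ : ℓ₂ ≠ 0) (hℓ₃ : ℓ₃ ≠ 0) :
    ∃ (k : Fin 3) (M : GL (Fin 2) K) (c : K), c ≠ 0 ∧ linSubst (M : Matrix (Fin 2) (Fin 2) K)
      (linForm ℓ₁ * linForm ℓ₂ * linForm ℓ₃) = c • cubicNormalForm k := by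
  by_cases h₁₂ : (of ![ℓ₁, ℓ₂]).det = 0
  · obtain ⟨s, hs, rfl⟩ := exists_eq_smul_of_det_eq_zero hℓ₁ hℓ₂ h₁₂
    by_cases h₁₃ : (of ![ℓ₁, ℓ₃]).det = 0
    · obtain ⟨t, ht, rfl⟩ := exists_eq_smul_of_det_eq_zero hℓ₁ hℓ₃ h₁₃
      obtain ⟨M, hM⟩ := exists_linSubst_linForm_pow_three hℓ₁
      refine ⟨2, M, s * t, mul_ne_zero hs ht, ?_⟩
      rw [show linForm ℓ₁ * linForm (s • ℓ₁) * linForm (t • ℓ₁) = (s * t) • linForm ℓ₁ ^ 3 by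
        simp only [map_smul, smul_eq_C_mul, map_mul]; ring, map_smul, hM]
    · obtain ⟨M, hM⟩ := exists_linSubst_linForm_sq_mul h₁₃
      refine ⟨1, M, s, hs, ?_⟩
      rw [show linForm ℓ₁ * linForm (s • ℓ₁) * linForm ℓ₃ = s • (linForm ℓ₁ ^ 2 * linForm ℓ₃) by
        simp only [map_smul, smul_eq_C_mul]; ring, map_smul, hM]
  by_cases h₁₃ : (of ![ℓ₁, ℓ₃]).det = 0
  · obtain ⟨t, ht, rfl⟩ := exists_eq_smul_of_det_eq_zero hℓ₁ hℓ₃ h₁₃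
    obtain ⟨M, hM⟩ := exists_linSubst_linForm_sq_mul h₁₂
    refine ⟨1, M, t, ht, ?_⟩
    rw [show linForm ℓ₁ * linForm ℓ₂ * linForm (t • ℓ₁) = t • (linForm ℓ₁ ^ 2 * linForm ℓ₂) by
      simp only [map_smul, smul_eq_C_mul]; ring, map_smul, hM]
  by_cases h₂₃ : (of ![ℓ₂, ℓ₃]).det = 0
  · obtain ⟨t, ht, rfl⟩ := exists_eq_smul_of_det_eq_zero hℓ₂ hℓ₃ h₂₃
    have h₂₁ : (of ![ℓ₂, ℓ₁]).det ≠ 0 := by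
      rw [det_of_fin_two] at h₁₂ ⊢
      exact fun h => h₁₂ (by linear_combination -h)
    obtain ⟨M, hM⟩ := exists_linSubst_linForm_sq_mul h₂₁
    refine ⟨1, M, t, ht, ?_⟩
    rw [show linForm ℓ₁ * linForm ℓ₂ * linForm (t • ℓ₂) = t • (linForm ℓ₂ ^ 2 * linForm ℓ₁) by
      simp only [map_smul, smul_eq_C_mul]; ring, map_smul, hM]
  obtain ⟨M, c, hc, hM⟩ := exists_linSubst_linForm_mul_mul h2 h₁₂ h₁₃ h₂₃
  exact ⟨0, M, c, hc, hM⟩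

lemma hasLinFormSqFactor_cubicNormalForm_one :
    HasLinFormSqFactor (cubicNormalForm 1 : MvPolynomial (Fin 2) R) :=
  ⟨![1, 0], ![-1, 1], by
    simp only [linForm_fin_two, cubicNormalForm, cons_val_zero, cons_val_one, cons_val_fin_one,
      map_one, map_zero, map_neg]
    ring⟩

lemma isLinFormCube_cubicNormalForm_two :
    IsLinFormCube (cubicNormalForm 2 : MvPolynomial (Fin 2) R) :=
  ⟨1, ![0, 1], by simp [cubicNormalForm, linForm_fin_two]⟩

/-- `u(v - u)(v + u)` vanishes at `(0, 1)`, `(1, 1)` and `(1, -1)`, while `ℓ²ℓ'` vanishes on at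
most two lines. -/
lemma not_hasLinFormSqFactor_cubicNormalForm_zero (h2 : (2 : K) ≠ 0) :
    ¬ HasLinFormSqFactor (cubicNormalForm 0 : MvPolynomial (Fin 2) K) := by
  rintro ⟨ℓ, ℓ', h⟩
  have key (x y : K) :
      x * y ^ 2 - x ^ 3 = (ℓ 0 * x + ℓ 1 * y) ^ 2 * (ℓ' 0 * x + ℓ' 1 * y) := by
    simpa [cubicNormalForm, linForm_fin_two] using congrArg (eval ![x, y]) h
  have h10 : ℓ 0 ^ 2 * ℓ' 0 = -1 := by linear_combination -key 1 0
  have h01 : ℓ 1 ^ 2 * ℓ' 1 = 0 := by linear_combination -key 0 1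
  have h11 : (ℓ 0 + ℓ 1) ^ 2 * (ℓ' 0 + ℓ' 1) = 0 := by linear_combination -key 1 1
  have h1m : (ℓ 0 - ℓ 1) ^ 2 * (ℓ' 0 - ℓ' 1) = 0 := by linear_combination -key 1 (-1)
  rcases mul_eq_zero.mp h01 with hb | hq
  · rw [pow_eq_zero_iff two_ne_zero |>.mp hb] at h11 h1m
    exact h2 (by linear_combination 2 * h10 - h11 - h1m)
  · rw [hq, add_zero] at h11
    rw [hq, sub_zero] at h1m
    have hp : ℓ' 0 ≠ 0 := fun hp => by simp [hp] at h10
    have hsum := pow_eq_zero_iff two_ne_zero |>.mp ((mul_eq_zero.mp h11).resolve_right hp)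
    have hdiff := pow_eq_zero_iff two_ne_zero |>.mp ((mul_eq_zero.mp h1m).resolve_right hp)
    have ha : ℓ 0 = 0 :=
      (mul_eq_zero.mp (by linear_combination hsum + hdiff : (2 : K) * ℓ 0 = 0)).resolve_left h2
    simp [ha] at h10

/-- `u²(v - u)` vanishes at `(0, 1)` and `(1, 1)`, while a nonzero `c • ℓ³` vanishes on one line. -/
lemma not_isLinFormCube_cubicNormalForm_one :
    ¬ IsLinFormCube (cubicNormalForm 1 : MvPolynomial (Fin 2) K) := by
  rintro ⟨c, ℓ, h⟩
  have key (x y : K) : x ^ 2 * y - x ^ 3 = c * (ℓ 0 * x + ℓ 1 * y) ^ 3 := by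
    simpa [cubicNormalForm, linForm_fin_two] using congrArg (eval ![x, y]) h
  have h10 : c * ℓ 0 ^ 3 = -1 := by linear_combination -key 1 0
  have h01 : c * ℓ 1 ^ 3 = 0 := by linear_combination -key 0 1
  have h11 : c * (ℓ 0 + ℓ 1) ^ 3 = 0 := by linear_combination -key 1 1
  have hc : c ≠ 0 := fun hc => by simp [hc] at h10
  rw [pow_eq_zero_iff three_ne_zero |>.mp ((mul_eq_zero.mp h01).resolve_left hc), add_zero,
    h10] at h11
  exact one_ne_zero (neg_eq_zero.mp h11)

lemma le_of_cubicNormalForm_eq_smul_linSubst (h2 : (2 : K) ≠ 0) {k k' : Fin 3} {c : K}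
    {P : Matrix (Fin 2) (Fin 2) K}
    (h : cubicNormalForm k' = c • linSubst P (cubicNormalForm k)) : k ≤ k' := by
  fin_cases k <;> fin_cases k' <;> first | decide | exfalso
  · exact not_hasLinFormSqFactor_cubicNormalForm_zero h2
      (h ▸ hasLinFormSqFactor_cubicNormalForm_one.smul_linSubst c P)
  · exact not_hasLinFormSqFactor_cubicNormalForm_zero h2
      (h ▸ isLinFormCube_cubicNormalForm_two.hasLinFormSqFactor.smul_linSubst c P)
  · exact not_isLinFormCube_cubicNormalForm_one
      (h ▸ isLinFormCube_cubicNormalForm_two.smul_linSubst c P)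

lemma le_of_linSubst_eq_smul_cubicNormalForm (h2 : (2 : K) ≠ 0) {g : MvPolynomial (Fin 2) K}
    {M : GL (Fin 2) K} {M' : Matrix (Fin 2) (Fin 2) K} {c c' : K} {k k' : Fin 3} (hc' : c' ≠ 0)
    (hM : linSubst (M : Matrix (Fin 2) (Fin 2) K) g = c • cubicNormalForm k)
    (hM' : linSubst M' g = c' • cubicNormalForm k') : k ≤ k' := by
  set P := ((M⁻¹ : GL (Fin 2) K) : Matrix (Fin 2) (Fin 2) K) * M'
  have hP : c' • cubicNormalForm k' = c • linSubst P (cubicNormalForm k) := by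
    rw [← map_smul, ← hM, linSubst_linSubst, ← mul_assoc, ← Units.val_mul, mul_inv_cancel,
      Units.val_one, one_mul, hM']
  refine le_of_cubicNormalForm_eq_smul_linSubst h2 (c := c'⁻¹ * c) (P := P) ?_
  rw [mul_smul, ← hP, inv_smul_smul₀ hc']

end BinaryForms

/-- Every nonzero binary cubic form over ℂ is equivalent, under the action of
GL(2, ℂ) by linear substitution of the variables, to a nonzero scalar multiple
of exactly one of the three normal forms uv² − u³, u²v − u³ and v³. -/
theorem binary_cubic_normal_forms (g : MvPolynomial (Fin 2) ℂ)
    (hg3 : g.IsHomogeneous 3) (hg : g ≠ 0) :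
    ∃! k : Fin 3,
      ∃ (M : GL (Fin 2) ℂ) (c : ℂ), c ≠ 0 ∧
        MvPolynomial.bind₁
          (fun i => ∑ j, MvPolynomial.C ((M : Matrix (Fin 2) (Fin 2) ℂ) i j) * X j) g =
        c • (![X 0 * X 1 ^ 2 - X 0 ^ 3,
               X 0 ^ 2 * X 1 - X 0 ^ 3,
               X 1 ^ 3] : Fin 3 → MvPolynomial (Fin 2) ℂ) k := by
  obtain ⟨a, s, ha, hs, hℓ, rfl⟩ := hg3.exists_eq_smul_prod_linForm hg
  obtain ⟨ℓ₁, ℓ₂, ℓ₃, rfl⟩ := Multiset.card_eq_three.mp hs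
  simp only [Multiset.insert_eq_cons, Multiset.mem_cons, Multiset.mem_singleton,
    forall_eq_or_imp, forall_eq] at hℓ
  obtain ⟨k, M, c, hc, hM⟩ :=
    exists_linSubst_linForm_mul_mul_eq_smul_cubicNormalForm two_ne_zero hℓ.1 hℓ.2.1 hℓ.2.2
  have hg' : linSubst (M : Matrix (Fin 2) (Fin 2) ℂ)
      (a • (({ℓ₁, ℓ₂, ℓ₃} : Multiset (Fin 2 → ℂ)).map linForm).prod) =
        (a * c) • cubicNormalForm k := by
    simp only [Multiset.insert_eq_cons, Multiset.map_cons, Multiset.prod_cons,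
      Multiset.map_singleton, Multiset.prod_singleton, map_smul, ← mul_assoc, hM, smul_smul]
  have hac : a * c ≠ 0 := mul_ne_zero ha hc
  refine ⟨k, ⟨M, a * c, hac, hg'⟩, fun k' ⟨M', c', hc', hM'⟩ => ?_⟩
  exact le_antisymm (le_of_linSubst_eq_smul_cubicNormalForm two_ne_zero hac hM' hg')
    (le_of_linSubst_eq_smul_cubicNormalForm two_ne_zero hc' hg' hM')
end

section
/- Let t₁, t₂, t₃ be complex numbers with t₁t₂ + t₂t₃ + t₃t₁ = 3. Then it is impossible that im(t₁), im(t₂), im(t₃) are all strictly positive, and impossible that they are all strictly negative. -/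
lemma aux_not_all_pos (t₁ t₂ t₃ : ℂ)
    (h : t₁ * t₂ + t₂ * t₃ + t₃ * t₁ = 3) :
    ¬(0 < t₁.im ∧ 0 < t₂.im ∧ 0 < t₃.im) := by
  rintro ⟨h1, h2, h3⟩
  have hre : (t₁ * t₂ + t₂ * t₃ + t₃ * t₁).re = 3 := by rw [h]; simp
  have him : (t₁ * t₂ + t₂ * t₃ + t₃ * t₁).im = 0 := by rw [h]; simp
  simp only [Complex.add_re, Complex.add_im, Complex.mul_re, Complex.mul_im] at hre him
  set a₁ := t₁.re; set a₂ := t₂.re; set a₃ := t₃.re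
  set b₁ := t₁.im; set b₂ := t₂.im; set b₃ := t₃.im
  have key : (a₁*a₂+a₂*a₃+a₃*a₁)*(b₁+b₂) + a₁^2*b₂ + a₂^2*b₁ + b₃*(a₁+a₂)^2
      = (a₁+a₂)*(a₁ * b₂ + b₁ * a₂ + (a₂ * b₃ + b₂ * a₃) + (a₃ * b₁ + b₃ * a₁)) := by
    ring
  rw [him, mul_zero] at key
  nlinarith [mul_nonneg (sq_nonneg a₁) h2.le, mul_nonneg (sq_nonneg a₂) h1.le,
    mul_nonneg (sq_nonneg (a₁ + a₂)) h3.le,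
    mul_pos h1 h2, mul_pos h2 h3, mul_pos h3 h1]

/-- If t₁t₂ + t₂t₃ + t₃t₁ = 3, then it is impossible that the imaginary parts
of t₁, t₂, t₃ are all strictly positive, and impossible that they are all
strictly negative. -/
theorem not_all_on_one_open_side (t₁ t₂ t₃ : ℂ)
    (h : t₁ * t₂ + t₂ * t₃ + t₃ * t₁ = 3) :
    ¬(0 < t₁.im ∧ 0 < t₂.im ∧ 0 < t₃.im) ∧
    ¬(t₁.im < 0 ∧ t₂.im < 0 ∧ t₃.im < 0) := by
  constructor
  · exact aux_not_all_pos t₁ t₂ t₃ h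
  · rintro ⟨h1, h2, h3⟩
    have h' : (starRingEnd ℂ) t₁ * (starRingEnd ℂ) t₂ + (starRingEnd ℂ) t₂ * (starRingEnd ℂ) t₃ +
        (starRingEnd ℂ) t₃ * (starRingEnd ℂ) t₁ = 3 := by
      rw [← map_mul, ← map_mul, ← map_mul, ← map_add, ← map_add, h]
      exact Complex.conj_ofNat 3
    exact aux_not_all_pos _ _ _ h' ⟨by simpa using h1, by simpa using h2, by simpa using h3⟩
end
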